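/- arXiv:1405.3151 — 9 statements merged into one kernel-verified Lean document; each statement's English description precedes it below -/
import Mathlib

section
/- Let V be a finite-dimensional ℚ-vector space, D ∈ End(V) with ker D = ker D², and Λ ⊂ V a full-rank D-stable lattice. Write the characteristic polynomial of D as ± t^r p(t) with p(0) > 0. Then the order of the finite group D⁻¹Λ/(Λ + ker D) equals p(0)/|T_D(Λ)|, where T_D(Λ) = Λ/((Λ ∩ DV) + (Λ ∩ ker D)) is the separation group. -/
/-!
Write `Λ_W = Λ ∩ DV` and `K = ker D`. Since `D` maps `D⁻¹Λ` onto `Λ_W`, it identifies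
`D⁻¹Λ / (Λ_W + K)` with `Λ_W / DΛ_W`, whose order is `|det(D|Λ_W)| = |det(D|DV)|`, a `ℤ`-basis
of `Λ_W` being a `ℚ`-basis of `DV`. The tower `D⁻¹Λ ⊇ Λ + K ⊇ Λ_W + K` and the modular law
`Λ ∩ (Λ_W + K) = Λ_W + Λ ∩ K` split this order as `|D⁻¹Λ / (Λ + K)| · |T_D(Λ)|`.
Finally `ker D = ker D²` gives `V = DV ⊕ K`, so `χ_D = χ_{D|DV} · t^{dim K}` with
`χ_{D|DV}(0) = ± det(D|DV) ≠ 0`; comparing with `± t^r p` yields `χ_{D|DV} = ± p`, hence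
`|det(D|DV)| = p(0)`.
-/

open Submodule Polynomial

noncomputable section

/-- Quotient of the submodule `M` by (its intersection with) the submodule `N`. -/
abbrev SQ {V : Type} [AddCommGroup V] (M N : Submodule ℤ V) :=
  M ⧸ (N.comap M.subtype)

theorem card_SQ_eq_relIndex {V : Type} [AddCommGroup V] (M N : Submodule ℤ V) :
    Nat.card (SQ M N) = N.toAddSubgroup.relIndex M.toAddSubgroup :=
  rfl

theorem card_SQ_sup_mul_card_SQ {V : Type} [AddCommGroup V] {A L N K : Submodule ℤ V}
    (hNL : N ≤ L) (hLA : L ≤ A) (hKA : K ≤ A) :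
    Nat.card (SQ A (L ⊔ K)) * Nat.card (SQ L (N ⊔ L ⊓ K)) = Nat.card (SQ A (N ⊔ K)) := by
  have hLK : L ⊔ K = L ⊔ (N ⊔ K) := by rw [← sup_assoc, sup_eq_left.mpr hNL]
  have hL : Nat.card (SQ (L ⊔ K) (N ⊔ K)) = Nat.card (SQ L (N ⊔ L ⊓ K)) := by
    rw [inf_comm, ← sup_inf_assoc_of_le K hNL, hLK]
    simp only [card_SQ_eq_relIndex, Submodule.sup_toAddSubgroup]
    rw [AddSubgroup.relIndex_sup_right, ← Submodule.sup_toAddSubgroup]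
    exact (AddSubgroup.inf_relIndex_right _ _).symm
  rw [← hL, mul_comm]
  simp only [card_SQ_eq_relIndex]
  exact AddSubgroup.relIndex_mul_relIndex _ _ _ (sup_le_sup_right hNL K) (sup_le hLA hKA)

/-- The isomorphism is induced by `f`, which maps `L.comap f` onto `L ⊓ range f`. -/
theorem card_SQ_comap_eq_card_SQ_map {V : Type} [AddCommGroup V] (f : V →ₗ[ℤ] V)
    (L : Submodule ℤ V) :
    Nat.card (SQ (L.comap f) ((L ⊓ LinearMap.range f) ⊔ LinearMap.ker f)) =
      Nat.card (SQ (L ⊓ LinearMap.range f) ((L ⊓ LinearMap.range f).map f)) := by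
  set N := L ⊓ LinearMap.range f
  let φ : L.comap f →ₗ[ℤ] N := f.restrict fun x hx => ⟨hx, LinearMap.mem_range_self f x⟩
  have hφ_apply (x : L.comap f) : (φ x : V) = f x := rfl
  have hφ : Function.Surjective φ := by
    rintro ⟨_, hy, x, rfl⟩
    exact ⟨⟨x, hy⟩, rfl⟩
  let ψ := ((N.map f).comap N.subtype).mkQ ∘ₗ φ
  have hker : LinearMap.ker ψ = (N ⊔ LinearMap.ker f).comap (L.comap f).subtype := by
    ext x
    simp only [ψ, LinearMap.mem_ker, LinearMap.comp_apply, Submodule.mkQ_apply,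
      Submodule.Quotient.mk_eq_zero, mem_comap, Submodule.coe_subtype, mem_map]
    constructor
    · rintro ⟨n, hn, hfn⟩
      rw [show (x : V) = n + (x - n) by abel]
      exact add_mem_sup hn (by simp [LinearMap.mem_ker, hfn, hφ_apply])
    · intro hx
      obtain ⟨n, hn, k, hk, hnk⟩ := mem_sup.mp hx
      exact ⟨n, hn, by rw [hφ_apply, ← hnk, map_add, LinearMap.mem_ker.mp hk, add_zero]⟩
  exact Nat.card_congr ((Submodule.quotEquivOfEq _ _ hker.symm).trans
    (ψ.quotKerEquivOfSurjective ((mkQ_surjective _).comp hφ))).toEquiv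

theorem card_SQ_map_eq_natAbs_det {V : Type} [AddCommGroup V] (f : V →ₗ[ℤ] V)
    (N : Submodule ℤ V) [Module.Free ℤ N] [Module.Finite ℤ N] (hN : ∀ x ∈ N, f x ∈ N)
    (hinj : Function.Injective (f.restrict hN)) :
    Nat.card (SQ N (N.map f)) = (LinearMap.det (f.restrict hN)).natAbs := by
  rw [show SQ N (N.map f) = (N ⧸ LinearMap.range (f.restrict hN)) by rw [LinearMap.range_restrict]]
  exact (Submodule.natAbs_det_equiv _ (LinearEquiv.ofInjective _ hinj)).symm

/-- A `ℤ`-basis of a lattice `L` spanning `W` is a `ℚ`-basis of `W`, in which `f` has the same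
(integral) matrix as its restriction to `L`. -/
theorem det_restrict_lattice {V : Type} [AddCommGroup V] [Module ℚ V] (f : V →ₗ[ℚ] V)
    (W : Submodule ℚ V) (L : Submodule ℤ V) [Module.Free ℤ L] [Module.Finite ℤ L]
    (hspan : span ℚ (L : Set V) = W) (hfW : ∀ x ∈ W, f x ∈ W) (hfL : ∀ x ∈ L, f x ∈ L) :
    ((LinearMap.det ((f.restrictScalars ℤ).restrict hfL) : ℤ) : ℚ) =
      LinearMap.det (f.restrict hfW) := by
  have hLW : ∀ x ∈ L, x ∈ W := fun x hx => hspan ▸ subset_span hx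
  let c := Module.Free.chooseBasis ℤ L
  let v (i : Module.Free.ChooseBasisIndex ℤ L) : W := ⟨c i, hLW _ (c i).2⟩
  have hv_indep : LinearIndependent ℚ v := by
    apply LinearIndependent.of_comp W.subtype
    exact (LinearIndependent.iff_fractionRing ℤ ℚ).mp
      (c.linearIndependent.map' L.subtype (ker_subtype L))
  have hv_span : ⊤ ≤ span ℚ (Set.range v) := by
    have hL : span ℤ (Set.range (L.subtype ∘ c)) = L := by
      rw [Set.range_comp, span_image, c.span_eq, map_subtype_top]
    have hW : (span ℚ (Set.range v)).map W.subtype = (⊤ : Submodule ℚ W).map W.subtype := by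
      rw [map_span, ← Set.range_comp, map_subtype_top]
      conv_rhs => rw [← hspan, ← hL, span_span_of_tower]
      rfl
    exact (map_injective_of_injective W.injective_subtype hW).ge
  let b := Module.Basis.mk hv_indep hv_span
  have hb_repr (x : L) (i) : b.repr ⟨x, hLW _ x.2⟩ i = (c.repr x i : ℚ) := by
    have hx : (⟨x, hLW _ x.2⟩ : W) = ∑ k, (c.repr x k : ℚ) • b k := by
      apply Subtype.ext
      simp only [b, v, Module.Basis.mk_apply, AddSubmonoidClass.coe_finsetSum,
        Int.cast_smul_eq_zsmul]
      conv_lhs => rw [← c.sum_repr x]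
      push_cast
      rfl
    rw [hx, b.repr_sum_self]
  have hmat : LinearMap.toMatrix b b (f.restrict hfW) =
      (LinearMap.toMatrix c c ((f.restrictScalars ℤ).restrict hfL)).map (Int.cast : ℤ → ℚ) := by
    ext i j
    rw [LinearMap.toMatrix_apply, Matrix.map_apply, LinearMap.toMatrix_apply, ← hb_repr,
      Module.Basis.mk_apply]
    rfl
  rw [← LinearMap.det_toMatrix b, hmat, ← LinearMap.det_toMatrix c]
  exact RingHom.map_det (Int.castRingHom ℚ) _

theorem span_inf_range_eq_range {V : Type} [AddCommGroup V] [Module ℚ V] (D : V →ₗ[ℚ] V)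
    (Λ : Submodule ℤ V) (hfull : span ℚ (Λ : Set V) = ⊤)
    (hstab : Λ.map (D.restrictScalars ℤ) ≤ Λ) :
    span ℚ ((Λ ⊓ (LinearMap.range D).restrictScalars ℤ : Submodule ℤ V) : Set V) =
      LinearMap.range D := by
  apply le_antisymm
  · rw [span_le]
    exact fun x hx => hx.2
  · calc LinearMap.range D = (span ℚ (Λ : Set V)).map D := by rw [hfull, LinearMap.range_eq_map]
      _ = span ℚ (D '' Λ) := map_span _ _
      _ ≤ _ := span_mono <| by
        rintro _ ⟨x, hx, rfl⟩
        exact ⟨hstab ⟨x, hx, rfl⟩, LinearMap.mem_range_self D x⟩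

theorem Polynomial.eq_of_mul_X_pow_eq_mul_X_pow {R : Type} [Semiring R] {f g : R[X]} {k r : ℕ}
    (hf : f.coeff 0 ≠ 0) (hg : g.coeff 0 ≠ 0) (h : f * X ^ k = g * X ^ r) : f = g := by
  have hkr : k = r := by
    have := congrArg natTrailingDegree h
    rwa [natTrailingDegree_mul_X_pow (fun h0 => hf (by simp [h0])),
      natTrailingDegree_mul_X_pow (fun h0 => hg (by simp [h0])),
      natTrailingDegree_eq_zero.mpr (Or.inr hf), natTrailingDegree_eq_zero.mpr (Or.inr hg),
      zero_add, zero_add] at this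
  subst hkr
  exact (isRegular_X_pow k).right h

namespace LinearMap

theorem isCompl_range_ker {K V : Type} [Field K] [AddCommGroup V] [Module K V]
    [FiniteDimensional K V] (f : V →ₗ[K] V) (hker : ker f = ker (f ∘ₗ f)) :
    IsCompl (range f) (ker f) := by
  refine (Submodule.isCompl_iff_disjoint _ _ f.finrank_range_add_finrank_ker.ge).mpr ?_
  rw [Submodule.disjoint_def]
  rintro _ ⟨y, rfl⟩ hfy
  have : y ∈ ker (f ∘ₗ f) := hfy
  rwa [← hker] at this

theorem injOn_range {K V : Type} [Field K] [AddCommGroup V] [Module K V]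
    [FiniteDimensional K V] (f : V →ₗ[K] V) (hker : ker f = ker (f ∘ₗ f)) :
    Set.InjOn f (range f) :=
  disjoint_ker_iff_injOn.mp (f.isCompl_range_ker hker).disjoint

def restrictRange {R M : Type} [Semiring R] [AddCommMonoid M] [Module R M]
    (f : M →ₗ[R] M) : range f →ₗ[R] range f :=
  f.restrict fun x _ => mem_range_self f x

@[simp]
theorem coe_restrictRange_apply {R M : Type} [Semiring R] [AddCommMonoid M] [Module R M]
    (f : M →ₗ[R] M) (x : range f) : (f.restrictRange x : M) = f x :=
  rfl

theorem charpoly_eq_charpoly_restrictRange_mul {K V : Type} [Field K] [AddCommGroup V]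
    [Module K V] [FiniteDimensional K V] (f : V →ₗ[K] V) (hker : ker f = ker (f ∘ₗ f)) :
    f.charpoly = f.restrictRange.charpoly * X ^ Module.finrank K (ker f) := by
  let e := Submodule.prodEquivOfIsCompl _ _ (f.isCompl_range_ker hker)
  have hconj : e.symm.conj f = f.restrictRange.prodMap 0 := by
    apply LinearMap.prod_ext
    · ext x <;> simp [e, LinearEquiv.conj_apply]
    · ext x <;> simp [e, LinearEquiv.conj_apply, LinearMap.mem_ker.mp x.2]
  rw [← e.symm.charpoly_conj f, hconj, charpoly_prodMap, charpoly_zero]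

theorem injective_restrictRange {K V : Type} [Field K] [AddCommGroup V] [Module K V]
    [FiniteDimensional K V] (f : V →ₗ[K] V) (hker : ker f = ker (f ∘ₗ f)) :
    Function.Injective f.restrictRange := fun x y hxy =>
  Subtype.ext (f.injOn_range hker x.2 y.2 (congrArg Subtype.val hxy))

theorem abs_det_restrictRange {K V : Type} [Field K] [LinearOrder K]
    [IsStrictOrderedRing K] [AddCommGroup V] [Module K V] [FiniteDimensional K V]
    (f : V →ₗ[K] V) (hker : ker f = ker (f ∘ₗ f)) (ε : K) (hε : ε = 1 ∨ ε = -1) (r : ℕ)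
    (p : K[X]) (hchar : f.charpoly = C ε * X ^ r * p) (hp0 : 0 < p.eval 0) :
    |LinearMap.det f.restrictRange| = p.eval 0 := by
  set g := f.restrictRange
  have hdet : LinearMap.det g ≠ 0 :=
    fun h => det_eq_zero_iff_ker_ne_bot.mp h (ker_eq_bot.mpr (f.injective_restrictRange hker))
  have hg0 : g.charpoly.coeff 0 ≠ 0 := by
    rw [LinearMap.det_eq_sign_charpoly_coeff] at hdet
    exact right_ne_zero_of_mul hdet
  have hε0 : ε ≠ 0 := by rcases hε with rfl | rfl <;> norm_num
  have hεp0 : (C ε * p).coeff 0 ≠ 0 := by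
    rw [coeff_C_mul, coeff_zero_eq_eval_zero]
    exact mul_ne_zero hε0 hp0.ne'
  have hg : g.charpoly = C ε * p := by
    refine eq_of_mul_X_pow_eq_mul_X_pow hg0 hεp0 (k := Module.finrank K (ker f)) (r := r) ?_
    rw [← f.charpoly_eq_charpoly_restrictRange_mul hker, hchar]
    ring
  have habsε : |ε| = 1 := by rcases hε with rfl | rfl <;> simp
  rw [LinearMap.det_eq_sign_charpoly_coeff, hg, coeff_C_mul, coeff_zero_eq_eval_zero, abs_mul,
    abs_mul, abs_pow, abs_neg, abs_one, one_pow, one_mul, habsε, one_mul, abs_of_pos hp0]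

end LinearMap

theorem stmt4 {V : Type} [AddCommGroup V] [Module ℚ V] [FiniteDimensional ℚ V]
    (D : V →ₗ[ℚ] V) (hker : LinearMap.ker D = LinearMap.ker (D ∘ₗ D))
    (Λ : Submodule ℤ V) (hfg : Λ.FG)
    (hfull : Submodule.span ℚ (Λ : Set V) = ⊤)
    (hstab : Λ.map (D.restrictScalars ℤ) ≤ Λ)
    (ε : ℚ) (hε : ε = 1 ∨ ε = -1) (r : ℕ) (p : Polynomial ℚ)
    (hchar : LinearMap.charpoly D = C ε * X ^ r * p)
    (hp0 : 0 < p.eval 0) :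
    Finite (SQ (Λ.comap (D.restrictScalars ℤ))
        (Λ ⊔ (LinearMap.ker D).restrictScalars ℤ)) ∧
    (Nat.card (SQ (Λ.comap (D.restrictScalars ℤ))
          (Λ ⊔ (LinearMap.ker D).restrictScalars ℤ)) : ℚ) *
      (Nat.card (SQ Λ ((Λ ⊓ (LinearMap.range D).restrictScalars ℤ) ⊔
          (Λ ⊓ (LinearMap.ker D).restrictScalars ℤ))) : ℚ) = p.eval 0 := by
  have : IsAddTorsionFree V := .of_isTorsionFree ℚ V
  set f := D.restrictScalars ℤ
  set N := Λ ⊓ (LinearMap.range D).restrictScalars ℤ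
  have hNf : ∀ x ∈ N, f x ∈ N := fun x hx => ⟨hstab ⟨x, hx.1, rfl⟩, LinearMap.mem_range_self D x⟩
  have : Module.Finite ℤ N := Module.Finite.iff_fg.mpr (hfg.of_le inf_le_left)
  have : Module.Free ℤ N := Module.free_of_finite_type_torsion_free'
  have hinj : Function.Injective (f.restrict hNf) := fun x y hxy =>
    Subtype.ext (D.injOn_range hker x.2.2 y.2.2 (congrArg Subtype.val hxy))
  set K := (LinearMap.ker D).restrictScalars ℤ
  have hKM : K ≤ Λ.comap f := fun x hx => by simp [f, LinearMap.mem_ker.mp hx]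
  have hindex : Nat.card (SQ (Λ.comap f) (Λ ⊔ K)) * Nat.card (SQ Λ (N ⊔ Λ ⊓ K)) =
      (LinearMap.det (f.restrict hNf)).natAbs := by
    rw [card_SQ_sup_mul_card_SQ inf_le_left (map_le_iff_le_comap.mp hstab) hKM]
    exact (card_SQ_comap_eq_card_SQ_map f Λ).trans (card_SQ_map_eq_natAbs_det f N hNf hinj)
  have hdet : ((LinearMap.det (f.restrict hNf) : ℤ) : ℚ) = LinearMap.det D.restrictRange :=
    det_restrict_lattice D _ N (span_inf_range_eq_range D Λ hfull hstab) _ hNf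
  have hp : ((LinearMap.det (f.restrict hNf)).natAbs : ℚ) = p.eval 0 := by
    rw [Nat.cast_natAbs, Int.cast_abs, hdet, D.abs_det_restrictRange hker ε hε r p hchar hp0]
  have hne : (LinearMap.det (f.restrict hNf)).natAbs ≠ 0 := fun h => by
    rw [h, Nat.cast_zero] at hp
    exact hp0.ne' hp.symm
  refine ⟨Nat.finite_of_card_ne_zero fun h => hne ?_, ?_⟩
  · rw [← hindex, h, zero_mul]
  · rw [← Nat.cast_mul, hindex, hp]
end
end

section
/- Let Λ be a lattice with endomorphism D satisfying Λ[D] = Λ[D²], and Λ' ⊆ Λ a D-stable full-rank sublattice. Set V = Λ ⊗ ℚ and B = (Λ + D⁻¹Λ')/(Λ + V[D]). Then B is a finite abelian group generated by at most d − r elements (d = rank Λ, r = nullity of D on V), its exponent divides p₀(0) where the minimal polynomial of D is ± t p₀(t) or ± p₀(t) with p₀(0) > 0, and D acts as zero on B. -/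
open Submodule Polynomial

noncomputable section

/-!
Write `p₀ = q·X + n` with `n = p₀(0)`; both shapes of the minimal polynomial give
`D ∘ p₀(D) = 0`. If `D b ∈ Λ'`, then `n b = p₀(D) b - q(D)(D b)` is a kernel vector plus an element of the
`D`-stable lattice `Λ'`; hence `n` kills `B = (Λ + D⁻¹Λ') / (Λ + V[D])`.
Since `Λ` and `V[D]` lie in the denominator, `D` induces a surjection of the lattice
`D(D⁻¹Λ') ⊆ Λ' ∩ D(V)` onto `B`, and that lattice has rank at most `dim D(V) = d - r`.
-/

theorem aeval_eq_zero_of_minpoly_eq_C_mul {K A : Type*} [Field K] [Ring A] [Algebra K A]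
    {a : A} (ha : IsIntegral K a) {c : K} {q : K[X]} (h : minpoly K a = C c * q) :
    aeval a q = 0 := by
  have hc : c ≠ 0 := by
    rintro rfl
    exact minpoly.ne_zero ha (by simpa using h)
  have := minpoly.aeval K a
  rw [h, map_mul, aeval_C, Algebra.algebraMap_eq_smul_one, smul_mul_assoc, one_mul] at this
  exact (smul_eq_zero.mp this).resolve_left hc

theorem map_sup_comap_le {R M : Type*} [Semiring R] [AddCommMonoid M] [Module R M]
    {f : M →ₗ[R] M} {Λ Λ' : Submodule R M} (hΛ : Λ.map f ≤ Λ) (hle : Λ' ≤ Λ) :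
    (Λ ⊔ Λ'.comap f).map f ≤ Λ := by
  rw [Submodule.map_sup]
  exact sup_le hΛ ((map_comap_le _ _).trans hle)

section Endomorphism

variable {R V : Type*} [Ring R] [AddCommGroup V] [Module R V] {D : V →ₗ[R] V}
  {Λ Λ' : Submodule ℤ V}

theorem aeval_apply_mem_of_map_le (hstab : Λ'.map (D.restrictScalars ℤ) ≤ Λ') (q : ℤ[X])
    {y : V} (hy : y ∈ Λ') : aeval D q y ∈ Λ' := by
  induction q using Polynomial.induction_on' with
  | add p q hp hq => simpa only [map_add, LinearMap.add_apply] using add_mem hp hq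
  | monomial k a =>
    rw [aeval_monomial, Module.End.mul_apply, algebraMap_int_eq, eq_intCast,
      Module.End.intCast_apply]
    refine zsmul_mem ?_ a
    induction k with
    | zero => simpa using hy
    | succ k ih => rw [pow_succ', Module.End.mul_apply]; exact hstab ⟨_, ih, rfl⟩

theorem eval_zero_smul_mem_sup_ker (hstab : Λ'.map (D.restrictScalars ℤ) ≤ Λ') {p : ℤ[X]}
    (hp : aeval D (X * p) = 0) {b : V} (hb : D b ∈ Λ') :
    p.eval 0 • b ∈ Λ' ⊔ (LinearMap.ker D).restrictScalars ℤ := by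
  have hsplit : aeval D p b = aeval D p.divX (D b) + p.eval 0 • b := by
    conv_lhs => rw [← divX_mul_X_add p]
    rw [map_add, map_mul, aeval_X, aeval_C, algebraMap_int_eq, eq_intCast, LinearMap.add_apply,
      Module.End.mul_apply, Module.End.intCast_apply, coeff_zero_eq_eval_zero]
  have hker : aeval D p b ∈ LinearMap.ker D := by
    simpa only [LinearMap.mem_ker, map_mul, aeval_X, Module.End.mul_apply,
      LinearMap.zero_apply] using LinearMap.congr_fun hp b
  rw [show p.eval 0 • b = -aeval D p.divX (D b) + aeval D p b by rw [hsplit]; abel]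
  exact add_mem (mem_sup_left (neg_mem (aeval_apply_mem_of_map_le hstab _ hb)))
    (mem_sup_right hker)

theorem eval_zero_smul_mem_sup_ker_of_mem_sup_comap
    (hstab : Λ'.map (D.restrictScalars ℤ) ≤ Λ') (hle : Λ' ≤ Λ) {p : ℤ[X]}
    (hp : aeval D (X * p) = 0) {x : V}
    (hx : x ∈ Λ ⊔ Λ'.comap (D.restrictScalars ℤ)) :
    p.eval 0 • x ∈ Λ ⊔ (LinearMap.ker D).restrictScalars ℤ := by
  obtain ⟨a, ha, b, hb, rfl⟩ := mem_sup.mp hx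
  rw [smul_add]
  exact add_mem (mem_sup_left (zsmul_mem ha _))
    (sup_le_sup_right hle _ (eval_zero_smul_mem_sup_ker hstab hp hb))

end Endomorphism

section Quotient

variable {V : Type} [AddCommGroup V]

theorem SQ.zsmul_eq_zero {M N : Submodule ℤ V} {n : ℤ} (h : ∀ x ∈ M, n • x ∈ N)
    (y : SQ M N) : n • y = 0 := by
  obtain ⟨x, rfl⟩ := Submodule.Quotient.mk_surjective _ y
  rw [← Submodule.Quotient.mk_smul, Submodule.Quotient.mk_eq_zero]
  exact h x x.2

theorem SQ.mkQ_inclusion_surjective {A P N : Submodule ℤ V} (hA : A ≤ N) :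
    Function.Surjective ((N.comap (A ⊔ P).subtype).mkQ ∘ₗ inclusion le_sup_right) := by
  rintro ⟨x, hx⟩
  obtain ⟨a, ha, c, hc, rfl⟩ := mem_sup.mp hx
  refine ⟨⟨c, hc⟩, (Submodule.Quotient.eq _).mpr ?_⟩
  simpa using hA ha

variable {R : Type*} [Ring R] [Module R V]

theorem exists_surjective_map_comap_to_SQ (D : V →ₗ[R] V) (Λ Λ' : Submodule ℤ V) :
    ∃ g : (Λ'.comap (D.restrictScalars ℤ)).map (D.restrictScalars ℤ) →ₗ[ℤ]
      SQ (Λ ⊔ Λ'.comap (D.restrictScalars ℤ)) (Λ ⊔ (LinearMap.ker D).restrictScalars ℤ),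
      Function.Surjective g := by
  set P := Λ'.comap (D.restrictScalars ℤ)
  set N := Λ ⊔ (LinearMap.ker D).restrictScalars ℤ
  let π := (N.comap (Λ ⊔ P).subtype).mkQ ∘ₗ inclusion le_sup_right
  let ψ := (D.restrictScalars ℤ).submoduleMap P
  have hψ : Function.Surjective ψ := LinearMap.submoduleMap_surjective _ _
  have hker : LinearMap.ker ψ ≤ LinearMap.ker π := by
    intro x hx
    rw [LinearMap.mem_ker, LinearMap.comp_apply, mkQ_apply, Submodule.Quotient.mk_eq_zero]
    refine mem_sup_right ?_
    simpa [ψ, Subtype.ext_iff] using hx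
  refine ⟨(LinearMap.ker ψ).liftQ π hker ∘ₗ (ψ.quotKerEquivOfSurjective hψ).symm.toLinearMap,
    fun y ↦ ?_⟩
  obtain ⟨x, rfl⟩ := SQ.mkQ_inclusion_surjective (le_sup_left : Λ ≤ N) y
  exact ⟨ψ x, by simp [π]⟩

end Quotient

theorem exists_finset_card_le_finrank_closure_eq_top {K G : Type*} [AddCommGroup K]
    [AddCommGroup G] [Module.Free ℤ K] [Module.Finite ℤ K] {g : K →+ G}
    (hg : Function.Surjective g) :
    ∃ s : Finset G, s.card ≤ Module.finrank ℤ K ∧ AddSubgroup.closure (s : Set G) = ⊤ := by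
  classical
  let b := Module.finBasis ℤ K
  refine ⟨Finset.univ.image (g ∘ b), Finset.card_image_le.trans (by simp), ?_⟩
  have hb : AddSubgroup.closure (Set.range b) = ⊤ := by
    rw [← span_int_eq_addSubgroupClosure, b.span_eq]
    rfl
  rw [Finset.coe_image, Finset.coe_univ, Set.image_univ, Set.range_comp,
    ← AddMonoidHom.map_closure, hb, AddSubgroup.map_top_of_surjective g hg]

theorem finrank_int_le_of_le_restrictScalars {V : Type*} [AddCommGroup V] [Module ℚ V]
    {W : Submodule ℚ V} [FiniteDimensional ℚ W] {K : Submodule ℤ V} [Module.Free ℤ K]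
    [Module.Finite ℤ K] (hKW : K ≤ W.restrictScalars ℤ) :
    Module.finrank ℤ K ≤ Module.finrank ℚ W := by
  let b := Module.finBasis ℤ K
  have hind : LinearIndependent ℚ (K.subtype ∘ b) :=
    (LinearIndependent.iff_fractionRing ℤ ℚ).mp (b.linearIndependent.map' _ K.ker_subtype)
  calc Module.finrank ℤ K = Module.finrank ℚ (span ℚ (Set.range (K.subtype ∘ b))) := by
        rw [finrank_span_eq_card hind, Fintype.card_fin]
    _ ≤ Module.finrank ℚ W := Submodule.finrank_mono <| span_le.mpr <| by
        rintro _ ⟨i, rfl⟩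
        exact hKW (b i).2

theorem stmt6_general {V : Type} [AddCommGroup V] [Module ℚ V] [FiniteDimensional ℚ V]
    (dd r : ℕ) (hd : Module.finrank ℚ V = dd)
    (D : V →ₗ[ℚ] V)
    (hr : Module.finrank ℚ (LinearMap.ker D) = r)
    (ε' : ℚ) (p₀ : Polynomial ℤ)
    (hmin : minpoly ℚ D = C ε' * (X * (p₀.map (Int.castRingHom ℚ))) ∨
      (Function.Injective D ∧ minpoly ℚ D = C ε' * (p₀.map (Int.castRingHom ℚ))))
    (hp₀0 : 0 < p₀.eval 0)
    (Λ Λ' : Submodule ℤ V) (hfg : Λ.FG) (hle : Λ' ≤ Λ)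
    (hstab : Λ.map (D.restrictScalars ℤ) ≤ Λ)
    (hstab' : Λ'.map (D.restrictScalars ℤ) ≤ Λ') :
    Finite (SQ (Λ ⊔ Λ'.comap (D.restrictScalars ℤ))
        (Λ ⊔ (LinearMap.ker D).restrictScalars ℤ)) ∧
    (∃ s : Finset (SQ (Λ ⊔ Λ'.comap (D.restrictScalars ℤ))
          (Λ ⊔ (LinearMap.ker D).restrictScalars ℤ)),
        s.card ≤ dd - r ∧
        AddSubgroup.closure (s : Set (SQ (Λ ⊔ Λ'.comap (D.restrictScalars ℤ))
          (Λ ⊔ (LinearMap.ker D).restrictScalars ℤ))) = ⊤) ∧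
    (AddMonoid.exponent (SQ (Λ ⊔ Λ'.comap (D.restrictScalars ℤ))
        (Λ ⊔ (LinearMap.ker D).restrictScalars ℤ)) ∣ (p₀.eval 0).toNat) ∧
    (∀ x ∈ Λ ⊔ Λ'.comap (D.restrictScalars ℤ),
        D x ∈ Λ ⊔ (LinearMap.ker D).restrictScalars ℤ) := by
  have hX : aeval D (X * p₀) = 0 := by
    have hD := Algebra.IsIntegral.isIntegral (R := ℚ) D
    rw [← aeval_map_algebraMap ℚ, algebraMap_int_eq, Polynomial.map_mul, Polynomial.map_X]
    rcases hmin with h | ⟨-, h⟩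
    · exact aeval_eq_zero_of_minpoly_eq_C_mul hD h
    · rw [map_mul, aeval_eq_zero_of_minpoly_eq_C_mul hD h, mul_zero]
  have htors := SQ.zsmul_eq_zero fun x hx ↦
    eval_zero_smul_mem_sup_ker_of_mem_sup_comap hstab' hle hX hx
  set K := (Λ'.comap (D.restrictScalars ℤ)).map (D.restrictScalars ℤ)
  obtain ⟨g, hg⟩ := exists_surjective_map_comap_to_SQ D Λ Λ'
  have : Module.IsTorsionFree ℤ V := .trans_faithfulSMul ℤ ℚ V
  have : Module.Finite ℤ K :=
    Module.Finite.iff_fg.mpr (hfg.of_le ((map_comap_le _ _).trans hle))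
  have : Module.Finite ℤ _ := Module.Finite.of_surjective g hg
  obtain ⟨s, hs, hclosure⟩ :=
    exists_finset_card_le_finrank_closure_eq_top (g := g.toAddMonoidHom) hg
  have hrank := finrank_int_le_of_le_restrictScalars (K := K) (W := LinearMap.range D)
    LinearMap.map_le_range
  have hnullity := LinearMap.finrank_range_add_finrank_ker D
  rw [hd, hr] at hnullity
  refine ⟨Module.finite_of_fg_torsion _ fun y ↦ ?_,
    ⟨s, hs.trans (hrank.trans_eq (by omega)), hclosure⟩,
    AddMonoid.exponent_dvd_of_forall_nsmul_eq_zero fun y ↦ ?_,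
    fun x hx ↦ mem_sup_left (map_sup_comap_le hstab hle (mem_map_of_mem hx))⟩
  · exact ⟨⟨p₀.eval 0, mem_nonZeroDivisors_of_ne_zero hp₀0.ne'⟩, htors y⟩
  · rw [← natCast_zsmul, Int.toNat_of_nonneg hp₀0.le, htors]

theorem stmt6 {V : Type} [AddCommGroup V] [Module ℚ V] [FiniteDimensional ℚ V]
    (dd r : ℕ) (hd : Module.finrank ℚ V = dd)
    (D : V →ₗ[ℚ] V) (hker : LinearMap.ker D = LinearMap.ker (D ∘ₗ D))
    (hr : Module.finrank ℚ (LinearMap.ker D) = r)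
    (ε' : ℚ) (hε' : ε' = 1 ∨ ε' = -1) (p₀ : Polynomial ℤ)
    (hmin : minpoly ℚ D = C ε' * (X * (p₀.map (Int.castRingHom ℚ))) ∨
      (Function.Injective D ∧ minpoly ℚ D = C ε' * (p₀.map (Int.castRingHom ℚ))))
    (hp₀0 : 0 < p₀.eval 0)
    (Λ Λ' : Submodule ℤ V) (hfg : Λ.FG) (hle : Λ' ≤ Λ)
    (hfull : Submodule.span ℚ (Λ : Set V) = ⊤)
    (hfull' : Submodule.span ℚ (Λ' : Set V) = ⊤)
    (hstab : Λ.map (D.restrictScalars ℤ) ≤ Λ)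
    (hstab' : Λ'.map (D.restrictScalars ℤ) ≤ Λ') :
    Finite (SQ (Λ ⊔ Λ'.comap (D.restrictScalars ℤ))
        (Λ ⊔ (LinearMap.ker D).restrictScalars ℤ)) ∧
    (∃ s : Finset (SQ (Λ ⊔ Λ'.comap (D.restrictScalars ℤ))
          (Λ ⊔ (LinearMap.ker D).restrictScalars ℤ)),
        s.card ≤ dd - r ∧
        AddSubgroup.closure (s : Set (SQ (Λ ⊔ Λ'.comap (D.restrictScalars ℤ))
          (Λ ⊔ (LinearMap.ker D).restrictScalars ℤ))) = ⊤) ∧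
    (AddMonoid.exponent (SQ (Λ ⊔ Λ'.comap (D.restrictScalars ℤ))
        (Λ ⊔ (LinearMap.ker D).restrictScalars ℤ)) ∣ (p₀.eval 0).toNat) ∧
    (∀ x ∈ Λ ⊔ Λ'.comap (D.restrictScalars ℤ),
        D x ∈ Λ ⊔ (LinearMap.ker D).restrictScalars ℤ) :=
  stmt6_general dd r hd D hr ε' p₀ hmin hp₀0 Λ Λ' hfg hle hstab hstab'
end
end

section
/- Let Λ be a lattice with endomorphism D satisfying Λ[D] = Λ[D²], Λ' ⊆ Λ a D-stable full-rank sublattice, and define B_{Λ,Λ'} = (Λ + D⁻¹Λ')/(Λ + V[D]) inside V = Λ⊗ℚ. Then for every positive integer e, B_{Λ,eΛ'} = e·B_{Λ,Λ'} ≅ B_{Λ,Λ'}/B_{Λ,Λ'}[e]. -/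
/-!
Multiplication by `e ≠ 0` is bijective on the `ℚ`-space `V` and commutes with `D`, so
`D⁻¹(eΛ') = e·D⁻¹Λ'`. As `Λ` dies in `V ⧸ (Λ + V[D])`, both `B_{Λ,Λ'}` and `B_{Λ,eΛ'}` are images
of preimages alone, whence `B_{Λ,eΛ'} = e·B_{Λ,Λ'}`; multiplication by `e` maps `B_{Λ,Λ'}` onto
this with kernel `B_{Λ,Λ'}[e]`.
-/

open Submodule

noncomputable section

theorem Submodule.comap_map_zsmul_id {V W : Type*} [AddCommGroup V] [Module ℚ V]
    [AddCommGroup W] [Module ℚ W] (f : V →ₗ[ℚ] W) {n : ℤ} (hn : n ≠ 0) (P : Submodule ℤ W) :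
    (P.map (n • LinearMap.id)).comap (f.restrictScalars ℤ) =
      (P.comap (f.restrictScalars ℤ)).map (n • LinearMap.id) := by
  have hn' : (n : ℚ) ≠ 0 := Int.cast_ne_zero.mpr hn
  ext x
  simp only [mem_comap, mem_map, LinearMap.smul_apply, LinearMap.id_apply,
    LinearMap.coe_restrictScalars]
  constructor
  · rintro ⟨y, hy, hxy⟩
    refine ⟨(n : ℚ)⁻¹ • x, ?_, ?_⟩
    · rwa [map_smul, ← hxy, ← Int.cast_smul_eq_zsmul ℚ, inv_smul_smul₀ hn']
    · rw [← Int.cast_smul_eq_zsmul ℚ, smul_inv_smul₀ hn']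
  · rintro ⟨y, hy, rfl⟩
    exact ⟨f y, hy, (map_zsmul f n y).symm⟩

theorem Submodule.map_mkQ_sup_of_le {R M : Type*} [Ring R] [AddCommGroup M] [Module R M]
    {N P : Submodule R M} (h : P ≤ N) (Q : Submodule R M) :
    (P ⊔ Q).map N.mkQ = Q.map N.mkQ := by
  rw [map_sup, bot_unique ((map_mono h).trans (mkQ_map_self N).le), bot_sup_eq]

theorem Submodule.map_mkQ_map_smul_id {R M : Type*} [CommRing R] [AddCommGroup M] [Module R M]
    (N Q : Submodule R M) (r : R) :
    (Q.map (r • LinearMap.id)).map N.mkQ = (Q.map N.mkQ).map (r • LinearMap.id) := by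
  rw [← map_comp, ← map_comp]
  rfl

def Submodule.quotientTorsionByEquivMapSmul {R M : Type*} [CommRing R] [AddCommGroup M]
    [Module R M] (B : Submodule R M) (r : R) :
    (B ⧸ (B ⊓ torsionBy R M r).comap B.subtype) ≃ₗ[R] B.map (r • LinearMap.id) :=
  let f : B →ₗ[R] M := r • B.subtype
  have hker : LinearMap.ker f = (B ⊓ torsionBy R M r).comap B.subtype := by
    ext x
    simp [f, mem_torsionBy_iff]
  have hrange : LinearMap.range f = B.map (r • LinearMap.id) := by
    ext y
    simp [f]
  (quotEquivOfEq _ _ hker.symm).trans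
    (f.quotKerEquivRange.trans (LinearEquiv.ofEq _ _ hrange))

theorem stmt7_general {V : Type} [AddCommGroup V] [Module ℚ V]
    (D : V →ₗ[ℚ] V)
    (Λ Λ' : Submodule ℤ V)
    (e : ℕ) (he : 0 < e)
    (N : Submodule ℤ V) (hN : N = Λ ⊔ (LinearMap.ker D).restrictScalars ℤ)
    (B Be : Submodule ℤ (V ⧸ N))
    (hB : B = (Λ ⊔ Λ'.comap (D.restrictScalars ℤ)).map N.mkQ)
    (hBe : Be = (Λ ⊔ (Λ'.map ((e : ℤ) • (LinearMap.id : V →ₗ[ℤ] V))).comap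
      (D.restrictScalars ℤ)).map N.mkQ) :
    Be = B.map ((e : ℤ) • (LinearMap.id : (V ⧸ N) →ₗ[ℤ] (V ⧸ N))) ∧
    Nonempty (Be ≃+ SQ B (B ⊓ Submodule.torsionBy ℤ (V ⧸ N) (e : ℤ))) := by
  have hΛN : Λ ≤ N := hN ▸ le_sup_left
  have hBe_eq : Be = B.map ((e : ℤ) • LinearMap.id) := by
    rw [hBe, hB, comap_map_zsmul_id D (Int.natCast_pos.mpr he).ne', map_mkQ_sup_of_le hΛN,
      map_mkQ_sup_of_le hΛN, map_mkQ_map_smul_id]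
  refine ⟨hBe_eq, ⟨?_⟩⟩
  rw [hBe_eq]
  exact (quotientTorsionByEquivMapSmul B (e : ℤ)).symm.toAddEquiv

theorem stmt7 {V : Type} [AddCommGroup V] [Module ℚ V] [FiniteDimensional ℚ V]
    (D : V →ₗ[ℚ] V) (hker : LinearMap.ker D = LinearMap.ker (D ∘ₗ D))
    (Λ Λ' : Submodule ℤ V) (hfg : Λ.FG) (hle : Λ' ≤ Λ)
    (hfull : Submodule.span ℚ (Λ : Set V) = ⊤)
    (hfull' : Submodule.span ℚ (Λ' : Set V) = ⊤)
    (hstab : Λ.map (D.restrictScalars ℤ) ≤ Λ)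
    (hstab' : Λ'.map (D.restrictScalars ℤ) ≤ Λ')
    (e : ℕ) (he : 0 < e)
    (N : Submodule ℤ V) (hN : N = Λ ⊔ (LinearMap.ker D).restrictScalars ℤ)
    (B Be : Submodule ℤ (V ⧸ N))
    (hB : B = (Λ ⊔ Λ'.comap (D.restrictScalars ℤ)).map N.mkQ)
    (hBe : Be = (Λ ⊔ (Λ'.map ((e : ℤ) • (LinearMap.id : V →ₗ[ℤ] V))).comap
      (D.restrictScalars ℤ)).map N.mkQ) :
    Be = B.map ((e : ℤ) • (LinearMap.id : (V ⧸ N) →ₗ[ℤ] (V ⧸ N))) ∧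
    Nonempty (Be ≃+ SQ B (B ⊓ Submodule.torsionBy ℤ (V ⧸ N) (e : ℤ))) :=
  stmt7_general D Λ Λ' e he N hN B Be hB hBe

end
end

section
/- Let V be a finite-dimensional ℚ-vector space with a nondegenerate symmetric bilinear form (·,·): V×V → ℚ. For subsets M, N ∈ L(V) (sums of a subspace and a finitely generated ℤ-submodule), the dual operation M ↦ M^∨ = {v ∈ V : (v, m) ∈ ℤ for all m ∈ M} satisfies: M^∨∨ = M, (M+N)^∨ = M^∨ ∩ N^∨, and (M∩N)^∨ = M^∨ + N^∨. -/
/-!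
Every `M = U + Λ` in `L(V)` is a coordinate box in a suitable basis `b` of `V`:
`M = {x | b.repr x i ∈ c i for all i}` with each `c i` one of `⊥`, `1`, `⊤` (that is, `0`, `ℤ`,
`ℚ`). To get `b`, take a basis of `U`, lift a `ℤ`-basis of the image of `Λ` in `V ⧸ U` (finitely
generated and torsion-free, hence free, and `ℚ`-independent), and extend. The dual of a box is the
box for the `B`-dual basis with coefficients `1 / c i`, which swaps `0` and `ℚ` and fixes `ℤ`. As
the dual basis of the dual basis is `b` again when `B` is symmetric, `M^∨∨ = M` and `M^∨ ∈ L(V)`.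
The identity `(M + N)^∨ = M^∨ ∩ N^∨` holds for all submodules; applied to `M^∨ + N^∨ ∈ L(V)` and
dualized it gives `(M ∩ N)^∨ = M^∨ + N^∨`.
-/

open Submodule LinearMap

noncomputable section

/-- Membership in `L(V)`: a subset of `V` of the form (subspace) + (f.g. ℤ-submodule). -/
def IsLV {V : Type} [AddCommGroup V] [Module ℚ V] (M : Submodule ℤ V) : Prop :=
  ∃ (U : Submodule ℚ V) (Λ : Submodule ℤ V), Λ.FG ∧ M = U.restrictScalars ℤ ⊔ Λ

open Module Set

universe u

namespace Submodule

section Algebra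

variable {R A : Type*} [CommSemiring R] [CommSemiring A] [Algebra R A]

theorem one_div_bot : (1 : Submodule R A) / ⊥ = ⊤ :=
  eq_top_iff.2 fun x _ ↦ mem_div_iff_forall_mul_mem.2 fun y hy ↦ by
    simp [(mem_bot R).1 hy]

theorem one_div_one : (1 : Submodule R A) / 1 = 1 :=
  le_antisymm (fun x hx ↦ by simpa using mem_div_iff_forall_mul_mem.1 hx 1 (one_le.1 le_rfl))
    (one_le_one_div.2 le_rfl)

theorem one_div_top {K : Type*} [Field K] [Algebra R K] (h : (1 : Submodule R K) ≠ ⊤) :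
    (1 : Submodule R K) / ⊤ = ⊥ := by
  refine eq_bot_iff.2 fun x hx ↦ (mem_bot R).2 (by_contra fun hx0 ↦ h (eq_top_iff.2 fun y _ ↦ ?_))
  simpa [hx0] using mem_div_iff_forall_mul_mem.1 hx (x⁻¹ * y) mem_top

end Algebra

theorem one_ne_top_int_rat : (1 : Submodule ℤ ℚ) ≠ ⊤ := by
  intro h
  obtain ⟨z, hz⟩ := mem_one.1 (h ▸ mem_top : (1 / 2 : ℚ) ∈ (1 : Submodule ℤ ℚ))
  have := congrArg Rat.den hz
  simp at this

theorem one_div_mem_of_mem {c : Submodule ℤ ℚ} (hc : c ∈ ({⊥, 1, ⊤} : Set (Submodule ℤ ℚ))) :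
    1 / c ∈ ({⊥, 1, ⊤} : Set (Submodule ℤ ℚ)) := by
  rcases hc with rfl | rfl | rfl <;>
    simp [one_div_bot, one_div_one, one_div_top one_ne_top_int_rat]

theorem one_div_one_div_of_mem {c : Submodule ℤ ℚ}
    (hc : c ∈ ({⊥, 1, ⊤} : Set (Submodule ℤ ℚ))) : 1 / (1 / c) = c := by
  rcases hc with rfl | rfl | rfl <;>
    simp [one_div_bot, one_div_one, one_div_top one_ne_top_int_rat]

end Submodule

namespace LinearMap.BilinForm

variable {R S M : Type*} [CommRing R] [Field S] [AddCommGroup M] [Algebra R S] [Module R M]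
  [Module S M] [IsScalarTower R S M] (B : LinearMap.BilinForm S M)

theorem mem_dualSubmodule_iff_le_comap {N : Submodule R M} {x : M} :
    x ∈ B.dualSubmodule N ↔ N ≤ (1 : Submodule R S).comap ((B x).restrictScalars R) :=
  Iff.rfl

theorem dualSubmodule_sup (N₁ N₂ : Submodule R M) :
    B.dualSubmodule (N₁ ⊔ N₂) = B.dualSubmodule N₁ ⊓ B.dualSubmodule N₂ := by
  ext x
  simp only [mem_inf, mem_dualSubmodule_iff_le_comap, sup_le_iff]

end LinearMap.BilinForm

namespace Module.Basis

variable {V ι : Type*} [AddCommGroup V] [Module ℚ V]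

def coordSubmodule (b : Basis ι ℚ V) (c : ι → Submodule ℤ ℚ) : Submodule ℤ V :=
  ⨅ i, (c i).comap ((b.coord i).restrictScalars ℤ)

variable (b : Basis ι ℚ V) (c : ι → Submodule ℤ ℚ)

@[simp]
theorem mem_coordSubmodule {x : V} : x ∈ b.coordSubmodule c ↔ ∀ i, b.repr x i ∈ c i := by
  simp [coordSubmodule]

theorem smul_mem_coordSubmodule {i : ι} {q : ℚ} (hq : q ∈ c i) :
    q • b i ∈ b.coordSubmodule c := by
  classical
  rw [mem_coordSubmodule]
  intro j
  rw [map_smul, b.repr_self, Finsupp.smul_single, Finsupp.single_apply]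
  split_ifs with h
  · subst h
    simpa using hq
  · exact zero_mem _

theorem coordSubmodule_le_iff [Finite ι] {N : Submodule ℤ V} :
    b.coordSubmodule c ≤ N ↔ ∀ i, ∀ q ∈ c i, q • b i ∈ N := by
  refine ⟨fun h i q hq ↦ h (b.smul_mem_coordSubmodule c hq), fun h x hx ↦ ?_⟩
  cases nonempty_fintype ι
  rw [← b.sum_repr x]
  exact sum_mem fun i _ ↦ h i _ ((b.mem_coordSubmodule c).1 hx i)

theorem dualSubmodule_coordSubmodule [Finite ι] [DecidableEq ι] (B : LinearMap.BilinForm ℚ V)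
    (hB : B.Nondegenerate) :
    B.dualSubmodule (b.coordSubmodule c) = (B.dualBasis hB b).coordSubmodule (1 / c ·) := by
  ext x
  simp only [BilinForm.mem_dualSubmodule_iff_le_comap, coordSubmodule_le_iff, mem_comap,
    LinearMap.restrictScalars_apply, map_smul, smul_eq_mul, mem_coordSubmodule,
    BilinForm.dualBasis_repr_apply, mem_div_iff_forall_mul_mem, mul_comm]

theorem coordSubmodule_eq_sup [Finite ι] {S T : Set ι} (hS : ∀ i ∈ S, c i = ⊤)
    (hT : ∀ i ∈ T, c i = 1) (hST : ∀ i, i ∉ S → i ∉ T → c i = ⊥) :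
    b.coordSubmodule c = (span ℚ (b '' S)).restrictScalars ℤ ⊔ span ℤ (b '' T) := by
  refine le_antisymm ((b.coordSubmodule_le_iff c).2 fun i q hq ↦ ?_) (sup_le ?_ ?_)
  · by_cases hiS : i ∈ S
    · exact mem_sup_left (smul_mem _ q (subset_span (mem_image_of_mem b hiS)))
    by_cases hiT : i ∈ T
    · obtain ⟨z, rfl⟩ := mem_one.1 (hT i hiT ▸ hq)
      rw [algebraMap_smul]
      exact mem_sup_right (smul_mem _ z (subset_span (mem_image_of_mem b hiT)))
    · rw [hST i hiS hiT, mem_bot] at hq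
      rw [hq, zero_smul]
      exact zero_mem _
  · intro x hx
    rw [restrictScalars_mem, b.mem_span_image] at hx
    refine (b.mem_coordSubmodule c).2 fun i ↦ ?_
    by_cases hi : i ∈ S
    · simp [hS i hi]
    · rw [Finsupp.notMem_support_iff.1 fun h ↦ hi (hx h)]
      exact zero_mem _
  · rw [span_le]
    rintro _ ⟨i, hi, rfl⟩
    simpa using b.smul_mem_coordSubmodule c (hT i hi ▸ one_le.1 le_rfl : (1 : ℚ) ∈ c i)

end Module.Basis

theorem Submodule.FG.exists_linearIndependent_span_eq {W : Type u} [AddCommGroup W] [Module ℚ W]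
    {Λ : Submodule ℤ W} (hΛ : Λ.FG) :
    ∃ (κ : Type u) (x : κ → W), LinearIndependent ℚ x ∧ span ℤ (range x) = Λ := by
  have : Module.Finite ℤ Λ := Module.Finite.iff_fg.mpr hΛ
  have : Module.IsTorsionFree ℤ W := .trans_faithfulSMul ℤ ℚ W
  let c := Module.Free.chooseBasis ℤ Λ
  refine ⟨_, Λ.subtype ∘ c,
    (LinearIndependent.iff_fractionRing ℤ ℚ).1 (c.linearIndependent.map' _ Λ.ker_subtype), ?_⟩
  rw [range_comp, ← map_span, c.span_eq, map_top, range_subtype]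

section

variable {V : Type} [AddCommGroup V] [Module ℚ V]

theorem exists_linearIndepOn_mkQ_sup_span_eq (U : Submodule ℚ V) {Λ : Submodule ℤ V}
    (hΛ : Λ.FG) : ∃ s : Set V, LinearIndepOn ℚ U.mkQ s ∧
      U.restrictScalars ℤ ⊔ Λ = U.restrictScalars ℤ ⊔ span ℤ s := by
  let π := U.mkQ.restrictScalars ℤ
  obtain ⟨κ, y, hy, hspan⟩ := (hΛ.map π).exists_linearIndependent_span_eq
  choose x hx using fun k ↦ U.mkQ_surjective (y k)
  have hxy : U.mkQ ∘ x = y := funext hx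
  have hker : U.restrictScalars ℤ = ker π := by rw [ker_restrictScalars, ker_mkQ]
  refine ⟨range x, (linearIndepOn_range_iff (hxy ▸ hy).injective.of_comp _).2 (hxy ▸ hy), ?_⟩
  rw [hker, sup_comm, ← comap_map_eq, sup_comm, ← comap_map_eq, Submodule.map_span,
    ← range_comp, ← hspan, ← hxy]
  rfl

theorem exists_basis_sup_span_eq [FiniteDimensional ℚ V] (U : Submodule ℚ V) {s : Set V}
    (hs : LinearIndepOn ℚ U.mkQ s) :
    ∃ (ι : Type) (b : Basis ι ℚ V) (S T : Set ι), Disjoint S T ∧ U.restrictScalars ℤ ⊔ span ℤ s =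
      (span ℚ (b '' S)).restrictScalars ℤ ⊔ span ℤ (b '' T) := by
  obtain ⟨t, htU, hspan, ht⟩ := exists_linearIndependent ℚ (U : Set V)
  have hts := LinearIndepOn.union_id_of_quotient htU ht hs
  have himage : ∀ r ⊆ t ∪ s, Basis.extend hts '' (Subtype.val ⁻¹' r) = r := fun r hr ↦ by
    rw [Basis.coe_extend, Subtype.image_preimage_coe,
      inter_eq_right.2 (hr.trans (Basis.subset_extend hts))]
  refine ⟨_, Basis.extend hts, Subtype.val ⁻¹' t, Subtype.val ⁻¹' s,
    (disjoint_left.2 fun v hvt hvs ↦ hs.ne_zero hvs ?_).preimage _, ?_⟩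
  · exact (Quotient.mk_eq_zero U).2 (htU hvt)
  · rw [himage t subset_union_left, himage s subset_union_right, hspan, span_eq]

theorem isLV_coordSubmodule {ι : Type*} [Finite ι] (b : Basis ι ℚ V) {c : ι → Submodule ℤ ℚ}
    (hc : ∀ i, c i ∈ ({⊥, 1, ⊤} : Set (Submodule ℤ ℚ))) : IsLV (b.coordSubmodule c) := by
  rw [b.coordSubmodule_eq_sup c (S := {i | c i = ⊤}) (T := {i | c i = 1}) (fun _ ↦ id)
    (fun _ ↦ id) fun i h₁ h₂ ↦ by rcases hc i with h | h | h <;> simp_all]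
  exact ⟨_, _, fg_span ((toFinite _).image b), rfl⟩

namespace IsLV

theorem sup {M N : Submodule ℤ V} (hM : IsLV M) (hN : IsLV N) : IsLV (M ⊔ N) := by
  obtain ⟨U₁, Λ₁, h₁, rfl⟩ := hM
  obtain ⟨U₂, Λ₂, h₂, rfl⟩ := hN
  exact ⟨U₁ ⊔ U₂, Λ₁ ⊔ Λ₂, h₁.sup h₂, by rw [restrictScalars_sup, sup_sup_sup_comm]⟩

theorem exists_eq_coordSubmodule [FiniteDimensional ℚ V] {M : Submodule ℤ V} (hM : IsLV M) :
    ∃ (ι : Type) (_ : Finite ι) (b : Basis ι ℚ V) (c : ι → Submodule ℤ ℚ),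
      (∀ i, c i ∈ ({⊥, 1, ⊤} : Set (Submodule ℤ ℚ))) ∧ M = b.coordSubmodule c := by
  classical
  obtain ⟨U, Λ, hΛ, rfl⟩ := hM
  obtain ⟨s, hs, hΛs⟩ := exists_linearIndepOn_mkQ_sup_span_eq U hΛ
  obtain ⟨ι, b, S, T, hST, hsup⟩ := exists_basis_sup_span_eq U hs
  have := Module.Finite.finite_basis b
  refine ⟨ι, this, b, fun i ↦ if i ∈ S then ⊤ else if i ∈ T then 1 else ⊥,
    fun i ↦ by dsimp only; split_ifs <;> simp, ?_⟩
  rw [hΛs, hsup, b.coordSubmodule_eq_sup _ (fun i hi ↦ if_pos hi)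
    (fun i hi ↦ by rw [if_neg (hST.notMem_of_mem_right hi), if_pos hi])
    fun i hS hT ↦ by rw [if_neg hS, if_neg hT]]

variable [FiniteDimensional ℚ V] {B : LinearMap.BilinForm ℚ V} {M : Submodule ℤ V}

theorem dualSubmodule (hB : B.Nondegenerate) (hM : IsLV M) : IsLV (B.dualSubmodule M) := by
  classical
  obtain ⟨ι, _, b, c, hc, rfl⟩ := hM.exists_eq_coordSubmodule
  rw [b.dualSubmodule_coordSubmodule c B hB]
  exact isLV_coordSubmodule _ fun i ↦ one_div_mem_of_mem (hc i)

theorem dualSubmodule_dualSubmodule (hB : B.Nondegenerate) (hB' : B.IsSymm) (hM : IsLV M) :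
    B.dualSubmodule (B.dualSubmodule M) = M := by
  classical
  obtain ⟨ι, _, b, c, hc, rfl⟩ := hM.exists_eq_coordSubmodule
  rw [b.dualSubmodule_coordSubmodule c B hB, Basis.dualSubmodule_coordSubmodule _ _ B hB,
    LinearMap.BilinForm.dualBasis_dualBasis hB hB']
  simp only [one_div_one_div_of_mem (hc _)]

end IsLV

end

theorem stmt11 {V : Type} [AddCommGroup V] [Module ℚ V] [FiniteDimensional ℚ V]
    (B : LinearMap.BilinForm ℚ V) (hsymm : ∀ x y, B x y = B y x)
    (hnd : B.Nondegenerate)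
    (M N : Submodule ℤ V) (hM : IsLV M) (hN : IsLV N) :
    B.dualSubmodule (B.dualSubmodule M : Submodule ℤ V) = M ∧
    (B.dualSubmodule (M ⊔ N) : Submodule ℤ V) =
      B.dualSubmodule M ⊓ B.dualSubmodule N ∧
    (B.dualSubmodule (M ⊓ N) : Submodule ℤ V) =
      B.dualSubmodule M ⊔ B.dualSubmodule N := by
  have hB : B.IsSymm := ⟨hsymm⟩
  refine ⟨hM.dualSubmodule_dualSubmodule hnd hB, B.dualSubmodule_sup M N, ?_⟩
  have h := ((hM.dualSubmodule hnd).sup (hN.dualSubmodule hnd)).dualSubmodule_dualSubmodule hnd hB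
  rwa [B.dualSubmodule_sup, hM.dualSubmodule_dualSubmodule hnd hB,
    hN.dualSubmodule_dualSubmodule hnd hB] at h
end
end

section
/- Let V be a finite-dimensional ℚ-vector space with a nondegenerate symmetric ℚ-valued pairing, and let N ⊆ M be members of L(V) (subspace-plus-lattice subsets) with M/N finite. Then M/N is isomorphic to N^∨/M^∨ as abelian groups. -/
open Submodule LinearMap

noncomputable section

/-!
Write `M = U + Λ` with `U` a `ℚ`-subspace and `Λ` finitely generated. As `M/N` is finite and `U`
is divisible, `U ⊆ N`; splitting `V = U ⊕ C`, the groups `M ∩ C ⊇ N ∩ C` are free of the same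
rank, and Smith normal form gives `M = U + ∑ ℤ eᵢ`, `N = U + ∑ ℤ aᵢeᵢ` with the `eᵢ` independent
modulo `U`. Nondegeneracy provides `μᵢ ⊥ U` with `B(μᵢ, eⱼ) = δᵢⱼ`, and with `W` the annihilator
of `U + ∑ ℚ eᵢ` one gets `N^∨ = W + ∑ ℤ aᵢ⁻¹μᵢ ⊇ M^∨ = W + ∑ ℤ μᵢ`: the same diagonal shape.
Both quotients are therefore `∏ ℤ/aᵢ`.
-/

namespace Submodule

lemma card_nsmul_mem_of_finite_quotient {V : Type*} [AddCommGroup V] {M N : Submodule ℤ V}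
    {x : V} (hx : x ∈ M) : Nat.card (M ⧸ N.comap M.subtype) • x ∈ N := by
  have h : Nat.card (M ⧸ N.comap M.subtype) • (⟨x, hx⟩ : M) ∈ N.comap M.subtype :=
    (Quotient.mk_eq_zero _).mp (by rw [Quotient.mk_smul]; exact card_nsmul_eq_zero')
  exact h

lemma restrictScalars_le_of_finite_quotient {V : Type*} [AddCommGroup V] [Module ℚ V]
    {U : Submodule ℚ V} {M N : Submodule ℤ V} [Finite (M ⧸ N.comap M.subtype)]
    (hUM : U.restrictScalars ℤ ≤ M) : U.restrictScalars ℤ ≤ N := by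
  intro u hu
  set k := Nat.card (M ⧸ N.comap M.subtype)
  have hk : (k : ℚ) ≠ 0 := Nat.cast_ne_zero.mpr Nat.card_pos.ne'
  have h := card_nsmul_mem_of_finite_quotient (N := N) (hUM (U.smul_mem (k : ℚ)⁻¹ hu))
  rwa [← Nat.cast_smul_eq_nsmul ℚ, smul_smul, mul_inv_cancel₀ hk, one_smul] at h

lemma finite_quotient_of_sup_eq {R V : Type*} [Ring R] [AddCommGroup V] [Module R V]
    {L M N : Submodule R V} (h : L ⊔ N = M) [Finite (M ⧸ N.comap M.subtype)] :
    Finite (L ⧸ N.comap L.subtype) := by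
  have e := quotientInfEquivSupQuotient L N
  rw [comap_subtype_self, top_inf_eq, h] at e
  exact Finite.of_equiv _ e.symm.toEquiv

section IsCompl

variable {R S V : Type*} [Ring R] [Ring S] [AddCommGroup V] [Module R V] [Module S V]
  [SMul R S] [IsScalarTower R S V] {U C : Submodule S V}

lemma restrictScalars_sup_inf_of_isCompl (hUC : IsCompl U C) {M : Submodule R V}
    (hUM : U.restrictScalars R ≤ M) : U.restrictScalars R ⊔ M ⊓ C.restrictScalars R = M := by
  rw [inf_comm, ← sup_inf_assoc_of_le _ hUM, ← restrictScalars_sup, hUC.sup_eq_top,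
    restrictScalars_top, top_inf_eq]

lemma fg_inf_restrictScalars_of_isCompl [IsNoetherianRing R] (hUC : IsCompl U C)
    {Λ : Submodule R V} (hΛ : Λ.FG) : ((U.restrictScalars R ⊔ Λ) ⊓ C.restrictScalars R).FG := by
  set P := (C.projection U hUC.symm).restrictScalars R
  refine (hΛ.map P).of_le fun x ⟨hx, hxC⟩ => ?_
  obtain ⟨u, hu, l, hl, rfl⟩ := mem_sup.mp hx
  refine ⟨l, hl, ?_⟩
  have hPu : P u = 0 := (projection_apply_eq_zero_iff hUC.symm).mpr hu
  have hPul : P (u + l) = u + l := projection_apply_of_mem_left hUC.symm hxC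
  rw [← hPul, map_add, hPu, zero_add]

end IsCompl

section TorsionFree

variable {V : Type*} [AddCommGroup V] [Module.IsTorsionFree ℤ V] {L N : Submodule ℤ V}

lemma finrank_comap_subtype_eq_of_finite_quotient [Module.Finite ℤ L]
    [Finite (L ⧸ N.comap L.subtype)] :
    Module.finrank ℤ (N.comap L.subtype) = Module.finrank ℤ L := by
  have : Finite (L ⧸ (N.comap L.subtype).toAddSubgroup) := ‹_›
  have := AddSubgroup.finiteIndex_of_finite_quotient (H := (N.comap L.subtype).toAddSubgroup)
  exact AddSubgroup.finrank_eq_of_finiteIndex (N.comap L.subtype).toAddSubgroup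

lemma exists_smith_normal_form_of_finite_quotient (hL : L.FG)
    [Finite (L ⧸ N.comap L.subtype)] :
    ∃ (n : ℕ) (e : Fin n → V) (a : Fin n → ℤ), LinearIndependent ℤ e ∧ (∀ i, a i ≠ 0) ∧
      L = span ℤ (Set.range e) ∧ L ⊓ N = span ℤ (Set.range fun i => a i • e i) := by
  have : Module.Finite ℤ L := Module.Finite.iff_fg.mpr hL
  obtain ⟨b, a, ab, hab⟩ := exists_smith_normal_form_of_rank_eq (Module.finBasis ℤ L)
    (finrank_comap_subtype_eq_of_finite_quotient (N := N))
  refine ⟨_, L.subtype ∘ b, a, b.linearIndependent.map' _ (ker_subtype L), fun i ha => ?_, ?_, ?_⟩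
  · exact ab.ne_zero i (Subtype.ext (by simp [hab, ha]))
  · rw [Set.range_comp, ← map_span, b.span_eq, map_subtype_top]
  · have hab' : (fun i => a i • (L.subtype ∘ b) i) =
        L.subtype ∘ (N.comap L.subtype).subtype ∘ ab := by
      ext i
      simp [hab]
    rw [hab', Set.range_comp, ← map_span, Set.range_comp, ← map_span, ab.span_eq,
      map_subtype_top, map_comap_subtype]

end TorsionFree

end Submodule

lemma IsLV.exists_smith_normal_form {V : Type} [AddCommGroup V] [Module ℚ V]
    {M N : Submodule ℤ V} (hM : IsLV M) (hle : N ≤ M) [Finite (M ⧸ N.comap M.subtype)] :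
    ∃ (U : Submodule ℚ V) (n : ℕ) (e : Fin n → V) (a : Fin n → ℤ),
      LinearIndependent ℚ (U.mkQ ∘ e) ∧ (∀ i, a i ≠ 0) ∧
      M = U.restrictScalars ℤ ⊔ span ℤ (Set.range e) ∧
      N = U.restrictScalars ℤ ⊔ span ℤ (Set.range fun i => a i • e i) := by
  have := IsAddTorsionFree.of_isTorsionFree ℚ V
  obtain ⟨U, Λ, hΛ, rfl⟩ := hM
  obtain ⟨C, hUC⟩ := U.exists_isCompl
  set M := U.restrictScalars ℤ ⊔ Λ
  set L := M ⊓ C.restrictScalars ℤ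
  have hUM : U.restrictScalars ℤ ≤ M := le_sup_left
  have hUN : U.restrictScalars ℤ ≤ N := restrictScalars_le_of_finite_quotient hUM
  have hML : U.restrictScalars ℤ ⊔ L = M := restrictScalars_sup_inf_of_isCompl hUC hUM
  have hLN : L ⊓ N = N ⊓ C.restrictScalars ℤ := by rw [inf_right_comm, inf_eq_right.mpr hle]
  have : Finite (L ⧸ N.comap L.subtype) := finite_quotient_of_sup_eq <|
    le_antisymm (sup_le inf_le_left hle) (hML ▸ sup_le (hUN.trans le_sup_right) le_sup_left)
  obtain ⟨n, e, a, he, ha, hLe, hNe⟩ := exists_smith_normal_form_of_finite_quotient (L := L)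
    (N := N) (fg_inf_restrictScalars_of_isCompl hUC hΛ)
  have heC : span ℚ (Set.range e) ≤ C := span_le.mpr <| by
    rintro _ ⟨i, rfl⟩
    have hi : e i ∈ L := by rw [hLe]; exact subset_span (Set.mem_range_self i)
    exact hi.2
  refine ⟨U, n, e, a, ((LinearIndependent.iff_fractionRing ℤ ℚ).mp he).map ?_, ha, ?_, ?_⟩
  · rw [ker_mkQ]
    exact hUC.disjoint.symm.mono_left heC
  · rw [← hLe, hML]
  · rw [← hNe, hLN, restrictScalars_sup_inf_of_isCompl hUC hUN]

namespace Submodule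

variable {ι : Type*}

lemma span_range_zsmul_eq {V : Type*} [AddCommGroup V] [Module ℚ V] {e : ι → V} {a : ι → ℤ}
    (ha : ∀ i, a i ≠ 0) :
    span ℚ (Set.range fun i => a i • e i) = span ℚ (Set.range e) := by
  refine le_antisymm (span_le.mpr ?_) (span_le.mpr ?_) <;> rintro _ ⟨i, rfl⟩
  · exact zsmul_mem (subset_span (Set.mem_range_self i)) _
  · have hei : e i = (a i : ℚ)⁻¹ • a i • e i := by
      rw [← Int.cast_smul_eq_zsmul ℚ, smul_smul, inv_mul_cancel₀ (Int.cast_ne_zero.mpr (ha i)),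
        one_smul]
    rw [hei]
    exact smul_mem _ _ (subset_span (Set.mem_range_self i))

variable [Fintype ι]

lemma sum_zsmul_mem_sup_span_zsmul_iff {V : Type*} [AddCommGroup V] [Module ℚ V]
    {U : Submodule ℚ V} {f : ι → V} (hf : LinearIndependent ℚ (U.mkQ ∘ f)) {c d : ι → ℤ} :
    ∑ i, c i • f i ∈ U.restrictScalars ℤ ⊔ span ℤ (Set.range fun i => d i • f i) ↔
      ∀ i, d i ∣ c i := by
  constructor
  · intro h
    obtain ⟨u, hu, _, hy, hsum⟩ := mem_sup.mp h
    obtain ⟨b, rfl⟩ := (mem_span_range_iff_exists_fun ℤ).mp hy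
    have hu' : ∑ i, ((c i - b i * d i : ℤ) : ℚ) • f i = u := by
      simp only [Int.cast_smul_eq_zsmul, sub_smul, mul_smul, Finset.sum_sub_distrib, ← hsum,
        add_sub_cancel_right]
    have hmkQ : U.mkQ (∑ i, ((c i - b i * d i : ℤ) : ℚ) • f i) = 0 :=
      (Quotient.mk_eq_zero U).mpr (hu' ▸ hu)
    simp only [map_sum, map_smul] at hmkQ
    have hzero := Fintype.linearIndependent_iff.mp hf _ hmkQ
    refine fun i => ⟨b i, ?_⟩
    have : c i - b i * d i = 0 := by exact_mod_cast hzero i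
    linarith
  · intro h
    choose b hb using h
    refine mem_sup_right ((mem_span_range_iff_exists_fun ℤ).mpr ⟨b, ?_⟩)
    simp only [hb, mul_comm (d _), mul_smul]

lemma nonempty_quotient_sup_span_zsmul_equiv {V : Type} [AddCommGroup V] [Module ℚ V]
    {U : Submodule ℚ V} {f : ι → V} (hf : LinearIndependent ℚ (U.mkQ ∘ f)) (d : ι → ℤ) :
    Nonempty (SQ (U.restrictScalars ℤ ⊔ span ℤ (Set.range f))
        (U.restrictScalars ℤ ⊔ span ℤ (Set.range fun i => d i • f i)) ≃ₗ[ℤ]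
      (ι → ℤ) ⧸ pi Set.univ fun i => Ideal.span {d i}) := by
  set M := U.restrictScalars ℤ ⊔ span ℤ (Set.range f)
  set N := U.restrictScalars ℤ ⊔ span ℤ (Set.range fun i => d i • f i)
  let φ : (ι → ℤ) →ₗ[ℤ] SQ M N := (N.comap M.subtype).mkQ ∘ₗ
    (Fintype.linearCombination ℤ f).codRestrict M fun c => mem_sup_right <|
      (mem_span_range_iff_exists_fun ℤ).mpr ⟨c, (Fintype.linearCombination_apply ℤ f c).symm⟩
  have hsurj : Function.Surjective φ := by
    rintro ⟨⟨v, hv⟩⟩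
    obtain ⟨u, hu, _, hy, rfl⟩ := mem_sup.mp hv
    obtain ⟨c, rfl⟩ := (mem_span_range_iff_exists_fun ℤ).mp hy
    refine ⟨c, (Quotient.eq _).mpr ?_⟩
    have hdiff : Fintype.linearCombination ℤ f c - (u + ∑ i, c i • f i) = -u := by
      simp [Fintype.linearCombination_apply]
    change Fintype.linearCombination ℤ f c - (u + ∑ i, c i • f i) ∈ N
    rw [hdiff]
    exact neg_mem (mem_sup_left hu)
  have hker : ker φ = pi Set.univ fun i => Ideal.span {d i} := by
    ext c
    simp only [φ, mem_ker, coe_comp, Function.comp_apply, mkQ_apply, Quotient.mk_eq_zero,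
      mem_comap, subtype_apply, codRestrict_apply, Fintype.linearCombination_apply, mem_pi,
      Set.mem_univ, Ideal.mem_span_singleton, forall_const]
    exact sum_zsmul_mem_sup_span_zsmul_iff hf
  exact ⟨((quotEquivOfEq _ _ hker.symm).trans (φ.quotKerEquivOfSurjective hsurj)).symm⟩

end Submodule

lemma LinearIndependent.exists_dual_biorthogonal {K V ι : Type*} [Field K] [AddCommGroup V]
    [Module K V] [Fintype ι] [DecidableEq ι] {v : ι → V} (hv : LinearIndependent K v) :
    ∃ φ : ι → Module.Dual K V, ∀ i j, φ i (v j) = if i = j then 1 else 0 := by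
  obtain ⟨g, hg⟩ := (Fintype.linearCombination K v).exists_leftInverse_of_injective
    (ker_eq_bot.mpr (linearIndependent_iff_injective_fintypeLinearCombination.mp hv))
  refine ⟨fun i => (LinearMap.proj i).comp g, fun i j => ?_⟩
  have hvj : v j = Fintype.linearCombination K v (Pi.single j 1) := by simp
  rw [hvj, LinearMap.comp_apply, ← LinearMap.comp_apply g, hg]
  simp [Pi.single_apply]

namespace LinearMap.BilinForm

section Field

variable {K V ι : Type*} [Field K] [AddCommGroup V] [Module K V] [Fintype ι] [DecidableEq ι]
  {B : LinearMap.BilinForm K V} {U : Submodule K V}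

lemma exists_biorthogonal_of_linearIndependent_mkQ [FiniteDimensional K V]
    (hB : B.Nondegenerate) {e : ι → V} (he : LinearIndependent K (U.mkQ ∘ e)) :
    ∃ μ : ι → V, (∀ i, ∀ u ∈ U, B (μ i) u = 0) ∧
      ∀ i j, B (μ i) (e j) = if i = j then 1 else 0 := by
  obtain ⟨φ, hφ⟩ := he.exists_dual_biorthogonal
  refine ⟨fun i => (B.toDual hB).symm ((φ i).comp U.mkQ), fun i u hu => ?_, fun i j => ?_⟩
  · rw [apply_toDual_symm_apply, LinearMap.comp_apply, mkQ_apply,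
      (Quotient.mk_eq_zero U).mpr hu, map_zero]
  · rw [apply_toDual_symm_apply, LinearMap.comp_apply, ← hφ i j]
    rfl

lemma linearIndependent_mkQ_of_biorthogonal {f e : ι → V} (hU : ∀ u ∈ U, ∀ j, B u (e j) = 0)
    (hfe : ∀ i j, B (f i) (e j) = if i = j then 1 else 0) :
    LinearIndependent K (U.mkQ ∘ f) := by
  let Φ : V →ₗ[K] ι → K := LinearMap.pi fun j => B.flip (e j)
  have hUΦ : U ≤ ker Φ := fun u hu => funext fun j => hU u hu j
  have hΦf : U.liftQ Φ hUΦ ∘ U.mkQ ∘ f = Pi.basisFun K ι := by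
    ext i j
    simp [Φ, hfe, Pi.single_apply, eq_comm]
  exact LinearIndependent.of_comp (U.liftQ Φ hUΦ) (hΦf ▸ (Pi.basisFun K ι).linearIndependent)

end Field

variable {V ι : Type*} [AddCommGroup V] [Module ℚ V] (B : LinearMap.BilinForm ℚ V)
  {U : Submodule ℚ V}

lemma apply_eq_zero_of_forall_apply_mem_one {v : V}
    (h : ∀ u ∈ U, B v u ∈ (1 : Submodule ℤ ℚ)) {u : V} (hu : u ∈ U) : B v u = 0 := by
  by_contra hne
  obtain ⟨z, hz⟩ := Submodule.mem_one.mp (h ((2 * B v u)⁻¹ • u) (U.smul_mem _ hu))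
  rw [map_smul, smul_eq_mul, mul_inv, mul_assoc, inv_mul_cancel₀ hne, mul_one, algebraMap_int_eq,
    eq_intCast] at hz
  have h2 : (2 * z : ℚ) = 1 := by rw [hz]; norm_num
  have : 2 * z = 1 := by exact_mod_cast h2
  omega

lemma mem_flip_orthogonal_sup_span {e : ι → V} {v : V} :
    v ∈ B.flip.orthogonal (U ⊔ span ℚ (Set.range e)) ↔
      (∀ u ∈ U, B v u = 0) ∧ ∀ i, B v (e i) = 0 := by
  change U ⊔ span ℚ (Set.range e) ≤ ker (B v) ↔ _
  rw [sup_le_iff, span_le, Set.range_subset_iff]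
  rfl

lemma dualSubmodule_sup_span [Fintype ι] [DecidableEq ι] {e μ : ι → V}
    (hμU : ∀ i, ∀ u ∈ U, B (μ i) u = 0) (hμe : ∀ i j, B (μ i) (e j) = if i = j then 1 else 0) :
    B.dualSubmodule (U.restrictScalars ℤ ⊔ span ℤ (Set.range e)) =
      (B.flip.orthogonal (U ⊔ span ℚ (Set.range e))).restrictScalars ℤ ⊔
        span ℤ (Set.range μ) := by
  apply le_antisymm
  · intro v hv
    have hvU : ∀ u ∈ U, B v u = 0 := fun u hu =>
      B.apply_eq_zero_of_forall_apply_mem_one (fun u hu => hv u (mem_sup_left hu)) hu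
    choose c hc using fun i =>
      Submodule.mem_one.mp (hv (e i) (mem_sup_right (subset_span (Set.mem_range_self i))))
    have hW : v - ∑ i, c i • μ i ∈ B.flip.orthogonal (U ⊔ span ℚ (Set.range e)) := by
      refine (B.mem_flip_orthogonal_sup_span).mpr ⟨fun u hu => ?_, fun j => ?_⟩
      · simp [hvU u hu, hμU _ u hu]
      · simp [hμe, ← hc j]
    rw [← sub_add_cancel v (∑ i, c i • μ i)]
    exact add_mem (mem_sup_left hW)
      (mem_sup_right (sum_mem fun i _ => zsmul_mem (subset_span (Set.mem_range_self i)) _))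
  · refine sup_le (fun w hw y hy => ?_) (span_le.mpr ?_)
    · have hy' : y ∈ (U ⊔ span ℚ (Set.range e)).restrictScalars ℤ := by
        rw [restrictScalars_sup]
        exact sup_le_sup_left (span_le_restrictScalars ℤ ℚ (Set.range e)) _ hy
      have hwy : B w y = 0 := mem_orthogonal_iff.mp hw y hy'
      rw [hwy]
      exact zero_mem _
    · rintro _ ⟨j, rfl⟩ y hy
      obtain ⟨u, hu, _, hz, rfl⟩ := mem_sup.mp hy
      obtain ⟨c, rfl⟩ := (mem_span_range_iff_exists_fun ℤ).mp hz
      exact Submodule.mem_one.mpr ⟨c j, by simp [hμU j u hu, hμe]⟩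

lemma exists_dualSubmodule_smith_normal_form [FiniteDimensional ℚ V] [Fintype ι] [DecidableEq ι]
    (hB : B.Nondegenerate) {e : ι → V} {a : ι → ℤ} (he : LinearIndependent ℚ (U.mkQ ∘ e))
    (ha : ∀ i, a i ≠ 0) :
    ∃ (W : Submodule ℚ V) (g : ι → V), LinearIndependent ℚ (W.mkQ ∘ g) ∧
      B.dualSubmodule (U.restrictScalars ℤ ⊔ span ℤ (Set.range fun i => a i • e i)) =
        W.restrictScalars ℤ ⊔ span ℤ (Set.range g) ∧
      B.dualSubmodule (U.restrictScalars ℤ ⊔ span ℤ (Set.range e)) =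
        W.restrictScalars ℤ ⊔ span ℤ (Set.range fun i => a i • g i) := by
  obtain ⟨μ, hμU, hμe⟩ := exists_biorthogonal_of_linearIndependent_mkQ hB he
  have ha' : ∀ i, (a i : ℚ) ≠ 0 := fun i => Int.cast_ne_zero.mpr (ha i)
  set g := fun i => (a i : ℚ)⁻¹ • μ i
  have hgμ : (fun i => a i • g i) = μ := funext fun i => by
    simp only [g, ← Int.cast_smul_eq_zsmul ℚ, smul_smul, mul_inv_cancel₀ (ha' i), one_smul]
  have hgU : ∀ i, ∀ u ∈ U, B (g i) u = 0 := fun i u hu => by simp [g, hμU i u hu]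
  have hge : ∀ i j, B (g i) (a j • e j) = if i = j then 1 else 0 := fun i j => by
    by_cases hij : i = j
    · subst hij
      simp [g, hμe, ha']
    · simp [g, hμe, hij]
  have hspan := span_range_zsmul_eq (e := e) ha
  refine ⟨B.flip.orthogonal (U ⊔ span ℚ (Set.range e)), g, ?_, ?_, ?_⟩
  · refine linearIndependent_mkQ_of_biorthogonal (fun w hw j => ?_) hge
    rw [← hspan] at hw
    exact ((B.mem_flip_orthogonal_sup_span).mp hw).2 j
  · rw [B.dualSubmodule_sup_span hgU hge, hspan]
  · rw [hgμ, B.dualSubmodule_sup_span hμU hμe]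

end LinearMap.BilinForm

theorem stmt12_general {V : Type} [AddCommGroup V] [Module ℚ V] [FiniteDimensional ℚ V]
    (B : LinearMap.BilinForm ℚ V)
    (hnd : B.Nondegenerate)
    (M N : Submodule ℤ V) (hM : IsLV M)
    (hle : N ≤ M) (hfin : Finite (SQ M N)) :
    Nonempty (SQ M N ≃+ SQ (B.dualSubmodule N) (B.dualSubmodule M)) := by
  obtain ⟨U, n, e, a, he, ha, rfl, rfl⟩ := hM.exists_smith_normal_form hle
  obtain ⟨W, g, hg, hdN, hdM⟩ := B.exists_dualSubmodule_smith_normal_form hnd he ha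
  obtain ⟨eM⟩ := nonempty_quotient_sup_span_zsmul_equiv he a
  obtain ⟨eD⟩ := nonempty_quotient_sup_span_zsmul_equiv hg a
  rw [hdN, hdM]
  exact ⟨(eM.trans eD.symm).toAddEquiv⟩

theorem stmt12 {V : Type} [AddCommGroup V] [Module ℚ V] [FiniteDimensional ℚ V]
    (B : LinearMap.BilinForm ℚ V) (hsymm : ∀ x y, B x y = B y x)
    (hnd : B.Nondegenerate)
    (M N : Submodule ℤ V) (hM : IsLV M) (hN : IsLV N)
    (hle : N ≤ M) (hfin : Finite (SQ M N)) :
    Nonempty (SQ M N ≃+ SQ (B.dualSubmodule N) (B.dualSubmodule M)) :=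
  stmt12_general B hnd M N hM hle hfin
end
end

section
/- Let V be a finite-dimensional ℚ-vector space, F = 1 + D an automorphism of V, and (·,·) an F-invariant nondegenerate symmetric ℚ-valued pairing on V. Then (DV)^∨ = ker D; moreover, if Λ is an F-invariant full-rank lattice in V then (DΛ)^∨ = D⁻¹(Λ^∨). -/
open Submodule LinearMap

noncomputable section

/-! Since `F` is an isometry, `B x (D y) = -B (D x) (F y)`. Hence `x` pairs integrally with
`D N` iff `D x` pairs integrally with `F N`, for any `ℤ`-submodule `N`: this gives
`(D N)^∨ = D⁻¹((F N)^∨)`. For `N = Λ` use `F Λ = Λ`; for `N = V` use `F V = V` and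
`V^∨ = 0`, which holds because a pairing that stays integral under all rational rescalings
vanishes, and `B` is nondegenerate. -/

namespace LinearMap.BilinForm

section Isometry

variable {R S M : Type*} [CommRing R] [Field S] [AddCommGroup M] [Algebra R S] [Module R M]
  [Module S M] [IsScalarTower R S M] {B : LinearMap.BilinForm S M} {F D : M →ₗ[S] M}

theorem apply_right_eq_neg_of_isometry (hD : F = LinearMap.id + D)
    (hF : ∀ x y, B (F x) (F y) = B x y) (x y : M) : B x (D y) = -B (D x) (F y) := by
  have h := hF x y
  subst hD
  simp only [LinearMap.add_apply, LinearMap.id_apply, map_add] at h ⊢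
  linear_combination h

theorem dualSubmodule_map_eq_comap_of_isometry (hD : F = LinearMap.id + D)
    (hF : ∀ x y, B (F x) (F y) = B x y) (N : Submodule R M) :
    B.dualSubmodule (N.map (D.restrictScalars R)) =
      (B.dualSubmodule (N.map (F.restrictScalars R))).comap (D.restrictScalars R) := by
  ext x
  simp only [mem_dualSubmodule, mem_comap, mem_map, forall_exists_index, and_imp,
    forall_apply_eq_imp_iff₂, restrictScalars_apply, apply_right_eq_neg_of_isometry hD hF,
    neg_mem_iff]

end Isometry

section CharZero

variable {K V : Type*} [Field K] [CharZero K] [AddCommGroup V] [Module K V]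
  {B : LinearMap.BilinForm K V}

theorem half_notMem_one : (2⁻¹ : K) ∉ (1 : Submodule ℤ K) := by
  rw [mem_one]
  rintro ⟨n, hn⟩
  rw [algebraMap_int_eq, eq_intCast] at hn
  have h : ((2 * n : ℤ) : K) = 1 := by
    push_cast
    rw [hn]
    norm_num
  have : 2 * n = 1 := by exact_mod_cast h
  omega

theorem mem_dualSubmodule_restrictScalars_iff {W : Submodule K V} {x : V} :
    x ∈ B.dualSubmodule (W.restrictScalars ℤ) ↔ ∀ w ∈ W, B x w = 0 := by
  refine ⟨fun hx w hw ↦ ?_, fun hx w hw ↦ by simp [hx w hw]⟩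
  by_contra hq
  -- rescaling `w` makes the pairing `1 / 2`, which is not an integer
  have h := hx ((2 * B x w)⁻¹ • w) (W.smul_mem _ hw)
  rw [map_smul, smul_eq_mul, mul_inv, mul_assoc, inv_mul_cancel₀ hq, mul_one] at h
  exact half_notMem_one h

theorem dualSubmodule_top_eq_bot (hB : B.SeparatingLeft) :
    B.dualSubmodule (⊤ : Submodule ℤ V) = ⊥ := by
  ext x
  rw [← restrictScalars_top ℤ K V, mem_dualSubmodule_restrictScalars_iff, mem_bot]
  exact ⟨fun hx ↦ hB x fun y ↦ hx y trivial, fun hx y _ ↦ by simp [hx]⟩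

end CharZero

end LinearMap.BilinForm

theorem stmt13_general {V : Type} [AddCommGroup V] [Module ℚ V]
    (B : LinearMap.BilinForm ℚ V)
    (hnd : B.Nondegenerate)
    (F : V →ₗ[ℚ] V) (hFbij : Function.Bijective F)
    (hFinv : ∀ x y, B (F x) (F y) = B x y)
    (D : V →ₗ[ℚ] V) (hD : F = LinearMap.id + D) :
    (B.dualSubmodule ((LinearMap.range D).restrictScalars ℤ) : Submodule ℤ V) =
      (LinearMap.ker D).restrictScalars ℤ ∧
    ∀ Λ : Submodule ℤ V, Λ.FG → Submodule.span ℚ (Λ : Set V) = ⊤ →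
      Λ.map (F.restrictScalars ℤ) = Λ →
      (B.dualSubmodule (Λ.map (D.restrictScalars ℤ)) : Submodule ℤ V) =
        (B.dualSubmodule Λ).comap (D.restrictScalars ℤ) := by
  have hdual := LinearMap.BilinForm.dualSubmodule_map_eq_comap_of_isometry (R := ℤ) hD hFinv
  have hF_top : (⊤ : Submodule ℤ V).map (F.restrictScalars ℤ) = ⊤ := by
    rw [Submodule.map_top]
    exact range_eq_top_of_surjective _ hFbij.2
  refine ⟨?_, fun Λ _ _ hΛ ↦ by rw [hdual, hΛ]⟩
  rw [← range_restrictScalars, ← Submodule.map_top, hdual, hF_top,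
    LinearMap.BilinForm.dualSubmodule_top_eq_bot hnd.1, ← ker_restrictScalars]
  rfl

theorem stmt13 {V : Type} [AddCommGroup V] [Module ℚ V] [FiniteDimensional ℚ V]
    (B : LinearMap.BilinForm ℚ V) (hsymm : ∀ x y, B x y = B y x)
    (hnd : B.Nondegenerate)
    (F : V →ₗ[ℚ] V) (hFbij : Function.Bijective F)
    (hFinv : ∀ x y, B (F x) (F y) = B x y)
    (D : V →ₗ[ℚ] V) (hD : F = LinearMap.id + D) :
    (B.dualSubmodule ((LinearMap.range D).restrictScalars ℤ) : Submodule ℤ V) =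
      (LinearMap.ker D).restrictScalars ℤ ∧
    ∀ Λ : Submodule ℤ V, Λ.FG → Submodule.span ℚ (Λ : Set V) = ⊤ →
      Λ.map (F.restrictScalars ℤ) = Λ →
      (B.dualSubmodule (Λ.map (D.restrictScalars ℤ)) : Submodule ℤ V) =
        (B.dualSubmodule Λ).comap (D.restrictScalars ℤ) :=
  stmt13_general B hnd F hFbij hFinv D hD
end
end

section
/- Let V be a finite-dimensional ℚ-vector space with a nondegenerate symmetric pairing decomposing V into orthogonal subspaces U ⊕ W, and let Λ ⊆ V be a full-rank lattice. Then the separation groups satisfy T_{U,W}(Λ) ≅ T_{U,W}(Λ^∨), where Λ^∨ is the dual lattice. -/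
/-
Let `p` be the projection onto `U` along `W`. The map `x ↦ p x` identifies `T_{U,W}(M)` with
`p(M) / (M ∩ U)`. Because `U ⊥ W`, pairing with an element of `U` does not see the
`W`-component, so inside `U` (with the restricted form, whose duals we denote by `*`) one has
`Λ^∨ ∩ U = p(Λ)^*` and, dualising this for `Λ^∨` and using `Λ^∨∨ = Λ`, `p(Λ^∨) = (Λ ∩ U)^*`.
Hence `T(Λ) ≅ p(Λ) / (Λ ∩ U)` and `T(Λ^∨) ≅ (Λ ∩ U)^* / p(Λ)^*`. For nested lattices `M ⊆ M'`,
a Smith basis `e` of `M'` with `M` spanned by the `aᵢ eᵢ` makes `M'^*` spanned by the dual basis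
`e^*` and `M^*` by the `aᵢ⁻¹ eᵢ^*`, so the linear map `eᵢ ↦ aᵢ⁻¹ eᵢ^*` carries `M' / M` onto
`M^* / M'^*`.
-/

open Submodule LinearMap

noncomputable section

open Module

lemma LinearMap.BilinForm.dualBasis_unitsSMul {K V ι : Type*} [Field K] [AddCommGroup V]
    [Module K V] [Finite ι] [DecidableEq ι] {B : LinearMap.BilinForm K V} (hB : B.Nondegenerate)
    (b : Basis ι K V) (w : ι → Kˣ) :
    B.dualBasis hB (b.unitsSMul w) = (B.dualBasis hB b).unitsSMul w⁻¹ := by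
  refine Basis.repr_injective (LinearEquiv.ext fun x => Finsupp.ext fun i => ?_)
  simp [Basis.unitsSMul_apply, Units.smul_def]

def SQ.mapEquiv {E F : Type} [AddCommGroup E] [AddCommGroup F] (φ : E ≃ₗ[ℤ] F)
    (M N : Submodule ℤ E) : SQ M N ≃+ SQ (M.map (φ : E →ₗ[ℤ] F)) (N.map (φ : E →ₗ[ℤ] F)) :=
  (Submodule.Quotient.equiv _ _ (φ.submoduleMap M) (by
    ext ⟨x, hx⟩
    simp only [mem_map, mem_comap, subtype_apply]
    constructor
    · rintro ⟨⟨y, hyM⟩, hyN, hyx⟩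
      exact ⟨y, hyN, congrArg Subtype.val hyx⟩
    · rintro ⟨y, hyN, rfl⟩
      obtain ⟨z, hzM, hz⟩ := hx
      obtain rfl := φ.injective hz
      exact ⟨⟨z, hzM⟩, hyN, rfl⟩)).toAddEquiv

section RatLattice

variable {E : Type} [AddCommGroup E] [Module ℚ E] {ι : Type*}

lemma exists_int_smul_mem_of_mem_span {L : Submodule ℤ E} {v : E}
    (hv : v ∈ span ℚ (L : Set E)) : ∃ n : ℤ, n ≠ 0 ∧ n • v ∈ L := by
  induction hv using Submodule.span_induction with
  | mem x hx => exact ⟨1, one_ne_zero, by simpa using hx⟩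
  | zero => exact ⟨1, one_ne_zero, by simp⟩
  | add x y _ _ hx hy =>
    obtain ⟨n, hn, hnx⟩ := hx
    obtain ⟨m, hm, hmy⟩ := hy
    refine ⟨m * n, mul_ne_zero hm hn, ?_⟩
    rw [smul_add, mul_smul, mul_comm, mul_smul]
    exact add_mem (L.smul_mem m hnx) (L.smul_mem n hmy)
  | smul q x _ hx =>
    obtain ⟨n, hn, hnx⟩ := hx
    refine ⟨q.den * n, mul_ne_zero (Int.natCast_ne_zero.mpr q.den_nz) hn, ?_⟩
    have hclear : ((q.den : ℤ) * n) • (q • x) = q.num • (n • x) := by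
      simp only [← Int.cast_smul_eq_zsmul ℚ, smul_smul, Int.cast_mul, Int.cast_natCast]
      rw [mul_right_comm, Rat.den_mul_eq_num]
    rw [hclear]
    exact L.smul_mem _ hnx

lemma span_rat_comap_subtype_eq_top {L : Submodule ℤ E} (hL : span ℚ (L : Set E) = ⊤)
    (U : Submodule ℚ E) : span ℚ (L.comap (U.subtype.restrictScalars ℤ) : Set U) = ⊤ := by
  refine eq_top_iff.mpr fun u _ => ?_
  obtain ⟨n, hn, hnu⟩ := exists_int_smul_mem_of_mem_span (hL ▸ mem_top : (u : E) ∈ _)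
  have hmem : n • u ∈ span ℚ (L.comap (U.subtype.restrictScalars ℤ) : Set U) :=
    subset_span (by simpa using hnu)
  have hn' : (n : ℚ) ≠ 0 := Int.cast_ne_zero.mpr hn
  simpa [← Int.cast_smul_eq_zsmul ℚ, smul_smul, inv_mul_cancel₀ hn'] using
    (span ℚ _).smul_mem (n : ℚ)⁻¹ hmem

lemma fg_comap_subtype {L : Submodule ℤ E} (hfg : L.FG) (U : Submodule ℚ E) :
    (L.comap (U.subtype.restrictScalars ℤ)).FG :=
  fg_of_fg_map_injective _ Subtype.val_injective (hfg.of_le (map_comap_le _ _))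

lemma linearIndependent_rat_coe_basis {L : Submodule ℤ E} (b : Basis ι ℤ L) :
    LinearIndependent ℚ (fun i => (b i : E)) :=
  (LinearIndependent.iff_fractionRing ℤ ℚ).mp (b.linearIndependent.map' L.subtype (ker_subtype L))

lemma span_int_range_coe_basis {M : Type*} [AddCommGroup M] {L : Submodule ℤ M}
    (b : Basis ι ℤ L) : span ℤ (Set.range fun i => (b i : M)) = L := by
  have hrange : (Set.range fun i => (b i : M)) = L.subtype '' Set.range b := (Set.range_comp _ _)
  rw [hrange, ← Submodule.map_span, b.span_eq, Submodule.map_top, range_subtype]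

def Submodule.ratBasisOfLattice (L : Submodule ℤ E) (hL : span ℚ (L : Set E) = ⊤)
    (b : Basis ι ℤ L) : Basis ι ℚ E :=
  Basis.mk (linearIndependent_rat_coe_basis b)
    (by rw [← span_span_of_tower ℤ, span_int_range_coe_basis, hL])

lemma Submodule.coe_ratBasisOfLattice (L : Submodule ℤ E) (hL : span ℚ (L : Set E) = ⊤)
    (b : Basis ι ℤ L) : ⇑(L.ratBasisOfLattice hL b) = fun i => (b i : E) :=
  Basis.coe_mk _ _

lemma Submodule.span_ratBasisOfLattice (L : Submodule ℤ E) (hL : span ℚ (L : Set E) = ⊤)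
    (b : Basis ι ℤ L) : span ℤ (Set.range (L.ratBasisOfLattice hL b)) = L := by
  rw [coe_ratBasisOfLattice, span_int_range_coe_basis]

lemma Submodule.FG.free_int {L : Submodule ℤ E} (hfg : L.FG) : Module.Free ℤ L :=
  have : IsAddTorsionFree E := IsAddTorsionFree.of_module_rat E
  have : Module.Finite ℤ L := Module.Finite.iff_fg.mpr hfg
  Module.free_of_finite_type_torsion_free'

lemma exists_basis_span_int_eq {L : Submodule ℤ E} (hfg : L.FG)
    (hL : span ℚ (L : Set E) = ⊤) :
    ∃ (n : ℕ) (b : Basis (Fin n) ℚ E), span ℤ (Set.range b) = L :=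
  have := hfg.free_int
  have : Module.Finite ℤ L := Module.Finite.iff_fg.mpr hfg
  ⟨_, L.ratBasisOfLattice hL (Module.finBasis ℤ L), L.span_ratBasisOfLattice hL _⟩

lemma finrank_int_eq_finrank_rat {L : Submodule ℤ E} (hfg : L.FG)
    (hL : span ℚ (L : Set E) = ⊤) : finrank ℤ L = finrank ℚ E := by
  obtain ⟨n, b, rfl⟩ := exists_basis_span_int_eq hfg hL
  rw [finrank_span_eq_card ((LinearIndependent.iff_fractionRing ℤ ℚ).mpr b.linearIndependent),
    finrank_eq_card_basis b]

-- Smith normal form of the inclusion `M ≤ M'`.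
lemma exists_basis_unitsSMul_of_le {M M' : Submodule ℤ E} (hM : M.FG)
    (hMspan : span ℚ (M : Set E) = ⊤) (hM' : M'.FG) (hle : M ≤ M') :
    ∃ (n : ℕ) (e : Basis (Fin n) ℚ E) (w : Fin n → ℚˣ),
      span ℤ (Set.range e) = M' ∧ span ℤ (Set.range (e.unitsSMul w)) = M := by
  have := hM'.free_int
  have : Module.Finite ℤ M' := Module.Finite.iff_fg.mpr hM'
  have hM'span : span ℚ (M' : Set E) = ⊤ := eq_top_mono (span_mono hle) hMspan
  have hrank : finrank ℤ (M.comap M'.subtype) = finrank ℤ M' := by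
    rw [(comapSubtypeEquivOfLe hle).finrank_eq, finrank_int_eq_finrank_rat hM hMspan,
      finrank_int_eq_finrank_rat hM' hM'span]
  obtain ⟨b, a, ab, hab⟩ := exists_smith_normal_form_of_rank_eq (Module.finBasis ℤ M') hrank
  have ha : ∀ i, (a i : ℚ) ≠ 0 := fun i h =>
    ab.ne_zero i (Subtype.ext (by rw [hab, Int.cast_eq_zero.mp h, zero_smul]; rfl))
  let e := M'.ratBasisOfLattice hM'span b
  refine ⟨_, e, fun i => Units.mk0 _ (ha i), M'.span_ratBasisOfLattice hM'span b, ?_⟩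
  have hcoe : ⇑(e.unitsSMul fun i => Units.mk0 _ (ha i)) = fun i => ((ab i : M') : E) := by
    ext i
    simp [e, Basis.unitsSMul_apply, M'.coe_ratBasisOfLattice, hab, Int.cast_smul_eq_zsmul]
  have hrange : (Set.range fun i => ((ab i : M') : E)) =
      M'.subtype '' Set.range fun i => (ab i : M') := Set.range_comp _ _
  rw [hcoe, hrange, ← Submodule.map_span, span_int_range_coe_basis ab, map_comap_subtype,
    inf_eq_right.mpr hle]

lemma nonempty_addEquiv_SQ_span_unitsSMul (e f : Basis ι ℚ E) (w : ι → ℚˣ) :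
    Nonempty (SQ (span ℤ (Set.range e)) (span ℤ (Set.range (e.unitsSMul w))) ≃+
      SQ (span ℤ (Set.range f)) (span ℤ (Set.range (f.unitsSMul w)))) := by
  let φ := (e.equiv f (Equiv.refl ι)).restrictScalars ℤ
  have hmap (g : ι → E) :
      (span ℤ (Set.range g)).map (φ : E →ₗ[ℤ] E) = span ℤ (Set.range (φ ∘ g)) := by
    rw [Submodule.map_span, ← Set.range_comp]; rfl
  have hφe : φ ∘ e = f := by ext i; simp [φ]
  have hφew : φ ∘ e.unitsSMul w = f.unitsSMul w := by
    ext i; simp [φ, Basis.unitsSMul_apply, Units.smul_def]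
  have ψ := SQ.mapEquiv φ (span ℤ (Set.range e)) (span ℤ (Set.range (e.unitsSMul w)))
  rw [hmap, hmap, hφe, hφew] at ψ
  exact ⟨ψ⟩

theorem nonempty_addEquiv_SQ_dualSubmodule {B : LinearMap.BilinForm ℚ E} (hB : B.Nondegenerate)
    {M M' : Submodule ℤ E} (hM : M.FG) (hMspan : span ℚ (M : Set E) = ⊤) (hM' : M'.FG)
    (hle : M ≤ M') :
    Nonempty (SQ M' M ≃+ SQ (B.dualSubmodule M) (B.dualSubmodule M')) := by
  obtain ⟨n, e, w, rfl, rfl⟩ := exists_basis_unitsSMul_of_le hM hMspan hM' hle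
  rw [B.dualSubmodule_span_of_basis hB, B.dualSubmodule_span_of_basis hB,
    B.dualBasis_unitsSMul hB]
  obtain ⟨f, hf⟩ : ∃ f : Basis (Fin n) ℚ E, B.dualBasis hB e = f.unitsSMul w :=
    ⟨(B.dualBasis hB e).unitsSMul w⁻¹, by ext i; simp [Basis.unitsSMul_apply, smul_smul]⟩
  have hfw : (f.unitsSMul w).unitsSMul w⁻¹ = f := by
    ext i; simp [Basis.unitsSMul_apply, smul_smul]
  rw [hf, hfw]
  exact nonempty_addEquiv_SQ_span_unitsSMul e f w

end RatLattice

section OrthogonalDecomposition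

variable {V : Type} [AddCommGroup V] [Module ℚ V] {U W : Submodule ℚ V} (hcompl : IsCompl U W)
include hcompl

lemma mem_sup_inf_iff_projectionOnto_mem {X : Submodule ℤ V} {x : V} (hx : x ∈ X) :
    x ∈ (X ⊓ U.restrictScalars ℤ) ⊔ (X ⊓ W.restrictScalars ℤ) ↔
      (U.projectionOnto W hcompl x : V) ∈ X := by
  constructor
  · intro h
    obtain ⟨u, hu, w, hw, rfl⟩ := mem_sup.mp h
    rw [map_add, projectionOnto_apply_of_mem_left hcompl hu.2,
      projectionOnto_apply_of_mem_right hcompl hw.2, add_zero]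
    exact hu.1
  · intro h
    rw [← add_sub_cancel (U.projectionOnto W hcompl x : V) x]
    exact add_mem_sup ⟨h, (U.projectionOnto W hcompl x).2⟩
      ⟨sub_mem hx h, sub_projection_mem hcompl x⟩

theorem nonempty_SQ_sup_inf_addEquiv (X : Submodule ℤ V) :
    Nonempty (SQ X ((X ⊓ U.restrictScalars ℤ) ⊔ (X ⊓ W.restrictScalars ℤ)) ≃+
      SQ (X.map ((U.projectionOnto W hcompl).restrictScalars ℤ))
        (X.comap (U.subtype.restrictScalars ℤ))) := by
  set p := (U.projectionOnto W hcompl).restrictScalars ℤ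
  let φ : X →ₗ[ℤ] SQ (X.map p) (X.comap (U.subtype.restrictScalars ℤ)) :=
    (mkQ _).comp (p.restrict fun x hx => mem_map_of_mem hx)
  have hφ : Function.Surjective φ := by
    rintro ⟨⟨_, x, hx, rfl⟩⟩
    exact ⟨⟨x, hx⟩, rfl⟩
  have hker :
      ker φ = ((X ⊓ U.restrictScalars ℤ) ⊔ (X ⊓ W.restrictScalars ℤ)).comap X.subtype := by
    ext ⟨x, hx⟩
    simp only [φ, mem_ker, coe_comp, Function.comp_apply, mkQ_apply, Quotient.mk_eq_zero,
      mem_comap, subtype_apply, coe_restrict_apply, LinearMap.coe_restrictScalars]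
    exact (mem_sup_inf_iff_projectionOnto_mem hcompl hx).symm
  exact ⟨((quotEquivOfEq _ _ hker.symm).trans (φ.quotKerEquivOfSurjective hφ)).toAddEquiv⟩

lemma comap_subtype_le_map_projectionOnto (X : Submodule ℤ V) :
    X.comap (U.subtype.restrictScalars ℤ) ≤ X.map ((U.projectionOnto W hcompl).restrictScalars ℤ) :=
  fun u hu => ⟨u, hu, projectionOnto_apply_left hcompl u⟩

section Form

variable {B : LinearMap.BilinForm ℚ V} (horth : ∀ u ∈ U, ∀ w ∈ W, B u w = 0)
include horth

lemma apply_projection_right {u : V} (hu : u ∈ U) (x : V) :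
    B u (U.projection W hcompl x) = B u x := by
  have h := horth u hu _ (sub_projection_mem hcompl x)
  rwa [map_sub, sub_eq_zero, eq_comm] at h

lemma nondegenerate_restrict (hB : B.IsSymm) (hnd : B.Nondegenerate) :
    (B.restrict U).Nondegenerate := by
  refine B.nondegenerate_restrict_of_disjoint_orthogonal hB.isRefl
    (disjoint_def.mpr fun u hu hu' => hnd.1 u fun x => ?_)
  rw [← apply_projection_right hcompl horth hu, hB.eq]
  exact (B.mem_orthogonal_iff.mp hu') _ (projection_apply_mem hcompl x)

theorem comap_subtype_dualSubmodule (X : Submodule ℤ V) :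
    (B.dualSubmodule X).comap (U.subtype.restrictScalars ℤ) =
      (B.restrict U).dualSubmodule (X.map ((U.projectionOnto W hcompl).restrictScalars ℤ)) := by
  ext u
  simp [LinearMap.BilinForm.mem_dualSubmodule, apply_projection_right hcompl horth u.2]

theorem map_projectionOnto_dualSubmodule (hB : B.IsSymm) (hnd : B.Nondegenerate)
    {Λ : Submodule ℤ V} (hfg : Λ.FG) (hfull : span ℚ (Λ : Set V) = ⊤) :
    (B.dualSubmodule Λ).map ((U.projectionOnto W hcompl).restrictScalars ℤ) =
      (B.restrict U).dualSubmodule (Λ.comap (U.subtype.restrictScalars ℤ)) := by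
  obtain ⟨n, b, rfl⟩ := exists_basis_span_int_eq hfg hfull
  set Y := (B.dualSubmodule (span ℤ (Set.range b))).map
    ((U.projectionOnto W hcompl).restrictScalars ℤ)
  have hdual := B.dualSubmodule_span_of_basis (R := ℤ) hnd b
  have hYfg : Y.FG := by
    simp only [Y, hdual]; exact (fg_span (Set.finite_range _)).map _
  have hYspan : span ℚ (Y : Set U) = ⊤ := by
    have hY : (Y : Set U) = U.projectionOnto W hcompl '' (B.dualSubmodule (span ℤ (Set.range b))) :=
      rfl
    rw [hY, ← Submodule.map_span, hdual, span_span_of_tower, Basis.span_eq, Submodule.map_top,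
      range_projectionOnto]
  obtain ⟨m, c, hc⟩ := exists_basis_span_int_eq hYfg hYspan
  have hBU := nondegenerate_restrict hcompl horth hB hnd
  calc Y = (B.restrict U).dualSubmodule ((B.restrict U).dualSubmodule Y) := by
        rw [← hc, LinearMap.BilinForm.dualSubmodule_dualSubmodule_of_basis _ hBU (hB.restrict U)]
    _ = _ := by
        rw [← comap_subtype_dualSubmodule hcompl horth,
          B.dualSubmodule_dualSubmodule_of_basis hnd hB]

end Form

end OrthogonalDecomposition

theorem stmt14_general {V : Type} [AddCommGroup V] [Module ℚ V]
    (B : LinearMap.BilinForm ℚ V) (hsymm : ∀ x y, B x y = B y x)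
    (hnd : B.Nondegenerate)
    (U W : Submodule ℚ V) (hcompl : IsCompl U W)
    (horth : ∀ u ∈ U, ∀ w ∈ W, B u w = 0)
    (Λ : Submodule ℤ V) (hfg : Λ.FG)
    (hfull : Submodule.span ℚ (Λ : Set V) = ⊤) :
    Nonempty
      (SQ Λ ((Λ ⊓ U.restrictScalars ℤ) ⊔ (Λ ⊓ W.restrictScalars ℤ)) ≃+
       SQ (B.dualSubmodule Λ)
         ((B.dualSubmodule Λ ⊓ U.restrictScalars ℤ) ⊔
          (B.dualSubmodule Λ ⊓ W.restrictScalars ℤ))) := by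
  have hB : B.IsSymm := ⟨hsymm⟩
  obtain ⟨T⟩ := nonempty_SQ_sup_inf_addEquiv hcompl Λ
  obtain ⟨T'⟩ := nonempty_SQ_sup_inf_addEquiv hcompl (B.dualSubmodule Λ)
  rw [map_projectionOnto_dualSubmodule hcompl horth hB hnd hfg hfull,
    comap_subtype_dualSubmodule hcompl horth] at T'
  obtain ⟨D⟩ := nonempty_addEquiv_SQ_dualSubmodule (nondegenerate_restrict hcompl horth hB hnd)
    (fg_comap_subtype hfg U) (span_rat_comap_subtype_eq_top hfull U) (hfg.map _)
    (comap_subtype_le_map_projectionOnto hcompl Λ)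
  exact ⟨T.trans (D.trans T'.symm)⟩

theorem stmt14 {V : Type} [AddCommGroup V] [Module ℚ V] [FiniteDimensional ℚ V]
    (B : LinearMap.BilinForm ℚ V) (hsymm : ∀ x y, B x y = B y x)
    (hnd : B.Nondegenerate)
    (U W : Submodule ℚ V) (hcompl : IsCompl U W)
    (horth : ∀ u ∈ U, ∀ w ∈ W, B u w = 0)
    (Λ : Submodule ℤ V) (hfg : Λ.FG)
    (hfull : Submodule.span ℚ (Λ : Set V) = ⊤) :
    Nonempty
      (SQ Λ ((Λ ⊓ U.restrictScalars ℤ) ⊔ (Λ ⊓ W.restrictScalars ℤ)) ≃+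
       SQ (B.dualSubmodule Λ)
         ((B.dualSubmodule Λ ⊓ U.restrictScalars ℤ) ⊔
          (B.dualSubmodule Λ ⊓ W.restrictScalars ℤ))) :=
  stmt14_general B hsymm hnd U W hcompl horth Λ hfg hfull
end
end

section
/- Let V be a finite-dimensional ℚ-vector space, F = 1 + D an automorphism with ker D = ker D², preserving a nondegenerate symmetric ℚ-valued pairing, and Λ ⊂ V an F-stable full-rank lattice with Λ^∨ ⊆ Λ. Then the group B_{Λ,Λ^∨} = (Λ + D⁻¹Λ^∨)/(Λ + ker D) admits a perfect antisymmetric ℚ/ℤ-valued pairing; explicitly, ⟨x,y⟩ = (x, (D|_{DV})⁻¹ y) mod ℤ on DV satisfies ⟨x,y⟩ + ⟨y,Fx⟩ = 0 and descends to a perfect antisymmetric pairing on (Λ^∨ ∩ DV)/(Λ^∨ ∩ DΛ) ≅ B_{Λ,Λ^∨}. -/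
/-!
Since `ker D = ker D²`, `V = ker D ⊕ DV` and `D` restricts to an automorphism of `DV`; write `σ`
for its inverse and `π` for the projection onto `DV` along `ker D`. Invariance of `B` under
`F = 1 + D` reads `(Da, b) + (a, Db) + (Da, Db) = 0`. Hence `DV ⊥ ker D`, so `B` stays
nondegenerate on `DV`, where `Λ^∨ ∩ DV` is the dual of the lattice `πΛ`; and, with `a = σx`,
`b = σy`, it gives `⟨x, y⟩ + ⟨y, x⟩ = -(x, y)`, an integer on `Λ^∨ ⊆ Λ`, as well as (i).

For any lattice `L` and automorphism `σ` with this antisymmetry, `⟨x, y⟩ = (x, σy)` is perfect on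
`L^∨ / σ⁻¹L`: by antisymmetry its kernel is `σ⁻¹(L^∨∨) = σ⁻¹L`, and a character of `L^∨` killing
`σ⁻¹L`, moved to `σL^∨`, extends to the lattice `σL^∨ + L` by zero on `L`, lifts to a `ℚ`-linear
form and is thus `(x, ·)` for some `x`, which lies in `L^∨` because the character kills `L`.
Finally `x ↦ σx` identifies `(Λ^∨ ∩ DV)/(Λ^∨ ∩ DΛ)` with `B_{Λ,Λ^∨} = (Λ + D⁻¹Λ^∨)/(Λ + ker D)`.
-/

open Submodule LinearMap

noncomputable section

theorem AddCircle.coe_eq_zero_iff_mem_one {r : ℚ} :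
    (r : AddCircle (1 : ℚ)) = 0 ↔ r ∈ (1 : Submodule ℤ ℚ) := by
  rw [AddCircle.coe_eq_zero_iff, Submodule.mem_one]
  simp

abbrev ratToCircle : ℚ →ₗ[ℤ] AddCircle (1 : ℚ) :=
  (QuotientAddGroup.mk' _).toIntLinearMap

theorem Submodule.exists_extend_sup_of_vanishing {R G A : Type*} [Ring R] [AddCommGroup G]
    [Module R G] [AddCommGroup A] [Module R A] {P L : Submodule R G} (χ : P →ₗ[R] A)
    (hχ : ∀ p : P, (p : G) ∈ L → χ p = 0) :
    ∃ χ' : ↥(P ⊔ L) →ₗ[R] A, (∀ p : P, χ' (inclusion le_sup_left p) = χ p) ∧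
      ∀ s : ↥(P ⊔ L), (s : G) ∈ L → χ' s = 0 := by
  let χq := (P.comap P.subtype ⊓ L.comap P.subtype).liftQ χ fun p hp ↦ hχ p hp.2
  let e := LinearMap.quotientInfEquivSupQuotient P L
  refine ⟨χq ∘ₗ e.symm.toLinearMap ∘ₗ (L.comap (P ⊔ L).subtype).mkQ, fun p ↦ ?_, fun s hs ↦ ?_⟩
  · have : (L.comap (P ⊔ L).subtype).mkQ (inclusion le_sup_left p) = e (Submodule.Quotient.mk p) :=
      (LinearMap.quotientInfEquivSupQuotient_apply_mk P L p).symm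
    simp only [LinearMap.comp_apply, LinearEquiv.coe_coe, this, LinearEquiv.symm_apply_apply]
    rfl
  · have : (L.comap (P ⊔ L).subtype).mkQ s = 0 := (Submodule.Quotient.mk_eq_zero _).mpr hs
    simp only [LinearMap.comp_apply, this, map_zero]

theorem LinearEquiv.exists_addMonoidHom_pairing {Q Q' A : Type*} [AddCommGroup Q]
    [AddCommGroup Q'] [AddCommGroup A] (e : Q ≃ₗ[ℤ] Q') (φ : Q →ₗ[ℤ] Q →ₗ[ℤ] A)
    (hanti : ∀ a b, φ a b = -φ b a) (hφ : Function.Bijective φ) :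
    ∃ φ' : Q' →+ Q' →+ A, (∀ a b, φ' a b = -φ' b a) ∧ Function.Bijective φ' ∧
      ∀ a b, φ' (e a) (e b) = φ a b := by
  let φ' := (addMonoidHomLequivInt ℤ).symm.toLinearMap ∘ₗ
    (e.arrowCongr (LinearEquiv.refl ℤ A)).toLinearMap ∘ₗ φ ∘ₗ e.symm.toLinearMap
  refine ⟨φ'.toAddMonoidHom, fun a b ↦ hanti _ _, ?_, fun a b ↦ by simp [φ']⟩
  exact (addMonoidHomLequivInt ℤ).symm.bijective.comp
    ((e.arrowCongr _).bijective.comp (hφ.comp e.symm.bijective))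

section Lattice

variable {R K W : Type*} [CommRing R] [Field K] [Algebra R K]
  [AddCommGroup W] [Module K W] [Module R W] [IsScalarTower R K W]

theorem Submodule.IsLattice.map_of_surjective {V' : Type*} [AddCommGroup V'] [Module K V']
    [Module R V'] [IsScalarTower R K V'] (L : Submodule R W) [L.IsLattice K] {f : W →ₗ[K] V'}
    (hf : Function.Surjective f) : (L.map (f.restrictScalars R)).IsLattice K where
  fg := IsLattice.fg.map _
  span_eq_top := by
    rw [map_coe, LinearMap.coe_restrictScalars, ← Submodule.map_span, IsLattice.span_eq_top,
      Submodule.map_top, range_eq_top.mpr hf]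

variable [IsFractionRing R K]

theorem Module.Basis.span_range_extendOfIsLattice {κ : Type*} {L : Submodule R W}
    [L.IsLattice K] (b : Module.Basis κ R L) :
    span R (Set.range (b.extendOfIsLattice K)) = L := by
  have : Set.range (b.extendOfIsLattice K) = L.subtype '' Set.range b := by
    rw [← Set.range_comp]; ext; simp
  rw [this, ← Submodule.map_span, b.span_eq, Submodule.map_top, Submodule.range_subtype]

variable [IsDomain R] [IsPrincipalIdealRing R]
  {B : LinearMap.BilinForm K W} (L : Submodule R W) [L.IsLattice K]

theorem LinearMap.BilinForm.dualSubmodule_dualSubmodule_of_isLattice (hB : B.Nondegenerate)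
    (hBs : B.IsSymm) : B.dualSubmodule (B.dualSubmodule L) = L := by
  rw [← (Module.Free.chooseBasis R L).span_range_extendOfIsLattice]
  exact B.dualSubmodule_dualSubmodule_of_basis hB hBs _

theorem LinearMap.BilinForm.isLattice_dualSubmodule (hB : B.Nondegenerate) :
    (B.dualSubmodule L).IsLattice K := by
  classical
  have h := B.dualSubmodule_span_of_basis (R := R) hB
    ((Module.Free.chooseBasis R L).extendOfIsLattice K)
  rw [(Module.Free.chooseBasis R L).span_range_extendOfIsLattice] at h
  rw [h]
  exact ⟨fg_span (Set.finite_range _), by rw [span_span_of_tower, Module.Basis.span_eq]⟩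

end Lattice

section CircleValued

variable {W : Type*} [AddCommGroup W] [Module ℚ W]

theorem Submodule.IsLattice.exists_dual_eq (S : Submodule ℤ W) [S.IsLattice ℚ]
    (χ : S →ₗ[ℤ] AddCircle (1 : ℚ)) :
    ∃ f : Module.Dual ℚ W, ∀ s : S, χ s = (f s : AddCircle (1 : ℚ)) := by
  let b := Module.Free.chooseBasis ℤ S
  choose q hq using fun i ↦ QuotientAddGroup.mk_surjective (χ (b i))
  let f := (b.extendOfIsLattice ℚ).constr ℚ q
  have hfb (i) : f (b i) = q i := by
    rw [← Module.Basis.extendOfIsLattice_apply ℚ, Module.Basis.constr_basis]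
  have : χ = ratToCircle ∘ₗ f.restrictScalars ℤ ∘ₗ S.subtype :=
    b.ext fun i ↦ by simp [hfb, hq]
  exact ⟨f, fun s ↦ by rw [this]; rfl⟩

variable [FiniteDimensional ℚ W] {B : LinearMap.BilinForm ℚ W}

theorem LinearMap.BilinForm.exists_mem_dualSubmodule_of_vanishing (hB : B.Nondegenerate)
    (L : Submodule ℤ W) [L.IsLattice ℚ] {P : Submodule ℤ W} (hP : P.FG)
    (χ : P →ₗ[ℤ] AddCircle (1 : ℚ)) (hχ : ∀ p : P, (p : W) ∈ L → χ p = 0) :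
    ∃ x ∈ B.dualSubmodule L, ∀ p : P, χ p = (B x p : AddCircle (1 : ℚ)) := by
  obtain ⟨χ', hχ'P, hχ'L⟩ := exists_extend_sup_of_vanishing χ hχ
  have : (P ⊔ L).IsLattice ℚ :=
    IsLattice.of_le_of_isLattice_of_fg ℚ le_sup_right (hP.sup IsLattice.fg)
  obtain ⟨f, hf⟩ := IsLattice.exists_dual_eq _ χ'
  refine ⟨(B.toDual hB).symm f, fun l hl ↦ ?_, fun p ↦ ?_⟩
  · rw [apply_toDual_symm_apply, ← AddCircle.coe_eq_zero_iff_mem_one]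
    exact (hf ⟨l, mem_sup_right hl⟩).symm.trans (hχ'L _ hl)
  · rw [apply_toDual_symm_apply, ← hχ'P, hf]
    rfl

end CircleValued

namespace LinearMap.BilinForm

variable {W : Type} [AddCommGroup W] [Module ℚ W] (B : LinearMap.BilinForm ℚ W) (σ : W →ₗ[ℚ] W)

def circlePairing (M : Submodule ℤ W) : M →ₗ[ℤ] M →ₗ[ℤ] AddCircle (1 : ℚ) :=
  (((B.compl₂ σ).restrictScalars₁₂ ℤ ℤ).compl₁₂ M.subtype M.subtype).compr₂ ratToCircle

theorem circlePairing_apply (M : Submodule ℤ W) (x y : M) :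
    B.circlePairing σ M x y = (B x (σ y) : AddCircle (1 : ℚ)) :=
  rfl

def IsCircleAntisymm (M : Submodule ℤ W) : Prop :=
  ∀ x ∈ M, ∀ y ∈ M, B x (σ y) + B y (σ x) ∈ (1 : Submodule ℤ ℚ)

variable {B σ} (L : Submodule ℤ W)

theorem circlePairing_eq_zero_of_mem_comap (x y : B.dualSubmodule L)
    (hy : (y : W) ∈ L.comap (σ.restrictScalars ℤ)) : B.circlePairing σ _ x y = 0 :=
  AddCircle.coe_eq_zero_iff_mem_one.mpr (x.2 _ hy)

theorem circlePairing_swap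
    (hanti : B.IsCircleAntisymm σ (B.dualSubmodule L)) (x y : B.dualSubmodule L) :
    B.circlePairing σ _ x y = -B.circlePairing σ _ y x := by
  rw [eq_neg_iff_add_eq_zero, circlePairing_apply, circlePairing_apply, ← AddCircle.coe_add]
  exact AddCircle.coe_eq_zero_iff_mem_one.mpr (hanti x x.2 y y.2)

def quotCirclePairing
    (hanti : B.IsCircleAntisymm σ (B.dualSubmodule L)) :
    SQ (B.dualSubmodule L) (L.comap (σ.restrictScalars ℤ)) →ₗ[ℤ]
      SQ (B.dualSubmodule L) (L.comap (σ.restrictScalars ℤ)) →ₗ[ℤ] AddCircle (1 : ℚ) :=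
  (B.circlePairing σ _).liftQ₂ _ _
    (fun x hx ↦ LinearMap.ext fun y ↦ by
      rw [circlePairing_swap L hanti, circlePairing_eq_zero_of_mem_comap L y x hx, neg_zero]; rfl)
    (fun y hy ↦ LinearMap.ext fun x ↦ circlePairing_eq_zero_of_mem_comap L x y hy)

variable {L} (hanti : B.IsCircleAntisymm σ (B.dualSubmodule L))

theorem quotCirclePairing_mk (x y : B.dualSubmodule L) :
    quotCirclePairing L hanti (Submodule.Quotient.mk x) (Submodule.Quotient.mk y) =
      (B x (σ y) : AddCircle (1 : ℚ)) :=
  rfl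

theorem quotCirclePairing_antisymm (a b) :
    quotCirclePairing L hanti a b = -quotCirclePairing L hanti b a := by
  induction a using Submodule.Quotient.induction_on
  induction b using Submodule.Quotient.induction_on
  exact circlePairing_swap L hanti _ _

variable [L.IsLattice ℚ]

theorem quotCirclePairing_injective (hB : B.Nondegenerate) (hBs : B.IsSymm) :
    Function.Injective (quotCirclePairing L hanti) := by
  refine (injective_iff_map_eq_zero _).mpr fun a ha ↦ ?_
  induction a using Submodule.Quotient.induction_on with | H x => ?_
  have hσx : σ x ∈ B.dualSubmodule (B.dualSubmodule L) := fun y hy ↦ by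
    have h : quotCirclePairing L hanti (Submodule.Quotient.mk x)
        (Submodule.Quotient.mk ⟨y, hy⟩) = 0 := LinearMap.congr_fun ha _
    rw [quotCirclePairing_antisymm, neg_eq_zero, quotCirclePairing_mk] at h
    rw [hBs.eq]
    exact AddCircle.coe_eq_zero_iff_mem_one.mp h
  rw [B.dualSubmodule_dualSubmodule_of_isLattice L hB hBs] at hσx
  exact (Submodule.Quotient.mk_eq_zero _).mpr hσx

theorem quotCirclePairing_surjective [FiniteDimensional ℚ W] (hB : B.Nondegenerate)
    (hσ : Function.Injective σ) :
    Function.Surjective (quotCirclePairing L hanti) := by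
  intro c
  let e := Submodule.equivMapOfInjective (σ.restrictScalars ℤ) hσ (B.dualSubmodule L)
  have hfg : (B.dualSubmodule L).FG := (B.isLattice_dualSubmodule L hB).fg
  obtain ⟨x, hx, hxc⟩ := B.exists_mem_dualSubmodule_of_vanishing hB L (hfg.map _)
    (c ∘ₗ Submodule.mkQ _ ∘ₗ e.symm.toLinearMap) fun p hp ↦ by
      obtain ⟨y, rfl⟩ := e.surjective p
      have hy : (Submodule.Quotient.mk y : SQ _ (L.comap (σ.restrictScalars ℤ))) = 0 :=
        (Submodule.Quotient.mk_eq_zero _).mpr hp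
      simp only [LinearMap.comp_apply, LinearEquiv.coe_coe, LinearEquiv.symm_apply_apply,
        Submodule.mkQ_apply, hy, map_zero]
  refine ⟨Submodule.Quotient.mk ⟨x, hx⟩, Submodule.linearMap_qext _ (LinearMap.ext fun y ↦ ?_)⟩
  have := hxc (e y)
  simp only [LinearMap.comp_apply, LinearEquiv.coe_coe, LinearEquiv.symm_apply_apply] at this
  exact (quotCirclePairing_mk hanti _ _).trans this.symm

theorem quotCirclePairing_bijective [FiniteDimensional ℚ W] (hB : B.Nondegenerate)
    (hBs : B.IsSymm) (hσ : Function.Injective σ) :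
    Function.Bijective (quotCirclePairing L hanti) :=
  ⟨quotCirclePairing_injective hanti hB hBs, quotCirclePairing_surjective hanti hB hσ⟩

end LinearMap.BilinForm

section InverseOnRange

variable {K V : Type*} [Field K] [AddCommGroup V] [Module K V] {D : V →ₗ[K] V}

theorem LinearMap.isCompl_ker_range_of_ker_eq_ker_comp [FiniteDimensional K V]
    (hker : ker D = ker (D ∘ₗ D)) : IsCompl (ker D) (range D) := by
  refine (Submodule.isCompl_iff_disjoint _ _
    (by rw [add_comm, D.finrank_range_add_finrank_ker])).mpr ?_
  rw [Submodule.disjoint_def]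
  rintro _ hk ⟨z, rfl⟩
  have hz : z ∈ ker (D ∘ₗ D) := hk
  rwa [← hker] at hz

def LinearMap.invOnRange (h : IsCompl (ker D) (range D)) : range D ≃ₗ[K] range D :=
  D.quotKerEquivRange.symm.trans (Submodule.quotientEquivOfIsCompl _ _ h)

variable (h : IsCompl (ker D) (range D))

theorem LinearMap.invOnRange_apply_self (x : V) :
    D.invOnRange h ⟨D x, mem_range_self D x⟩ = (range D).projectionOnto (ker D) h.symm x := by
  rw [invOnRange, LinearEquiv.trans_apply, quotKerEquivRange_symm_apply_image]
  rfl

theorem LinearMap.apply_projectionOnto_range (x : V) :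
    D ((range D).projectionOnto (ker D) h.symm x) = D x := by
  have hx := Submodule.sub_projection_mem h.symm x
  rw [LinearMap.mem_ker, map_sub, sub_eq_zero] at hx
  rw [Submodule.coe_projectionOnto_apply, hx]

theorem LinearMap.invOnRange_eq_of_apply_eq {y z : range D} (hz : D z = y) :
    D.invOnRange h y = z := by
  obtain ⟨z, hzD⟩ := z
  obtain rfl : y = ⟨D z, mem_range_self D z⟩ := Subtype.ext hz.symm
  rw [invOnRange_apply_self, Submodule.projectionOnto_apply_of_mem_left h.symm hzD]

theorem LinearMap.apply_invOnRange (y : range D) : D (D.invOnRange h y) = y := by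
  obtain ⟨_, x, rfl⟩ := y
  rw [invOnRange_apply_self, apply_projectionOnto_range h]

end InverseOnRange

section InvariantForm

variable {R V : Type*} [CommRing R] [AddCommGroup V] [Module R V] {B : LinearMap.BilinForm R V}
  {D : V →ₗ[R] V}

theorem LinearMap.BilinForm.apply_add_apply_add_apply_eq_zero
    (hinv : ∀ x y, B (x + D x) (y + D y) = B x y) (a b : V) :
    B (D a) b + B a (D b) + B (D a) (D b) = 0 := by
  have := hinv a b
  simp only [map_add, LinearMap.add_apply] at this
  linear_combination this

theorem LinearMap.BilinForm.apply_eq_zero_of_mem_range_of_mem_ker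
    (hinv : ∀ x y, B (x + D x) (y + D y) = B x y) {w k : V} (hw : w ∈ range D)
    (hk : k ∈ ker D) : B w k = 0 := by
  obtain ⟨a, rfl⟩ := hw
  simpa [mem_ker.mp hk] using B.apply_add_apply_add_apply_eq_zero hinv a k

end InvariantForm

section RangeLattice

variable {V : Type} [AddCommGroup V] [Module ℚ V] {B : LinearMap.BilinForm ℚ V}
  {D : V →ₗ[ℚ] V} (h : IsCompl (ker D) (range D))

theorem LinearMap.BilinForm.apply_projectionOnto_range
    (hinv : ∀ x y, B (x + D x) (y + D y) = B x y) (w : range D) (v : V) :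
    B w ((range D).projectionOnto (ker D) h.symm v) = B w v := by
  rw [eq_comm, ← sub_eq_zero, ← map_sub, Submodule.coe_projectionOnto_apply]
  exact B.apply_eq_zero_of_mem_range_of_mem_ker hinv w.2 (Submodule.sub_projection_mem h.symm v)

theorem LinearMap.BilinForm.nondegenerate_restrict_range (h : IsCompl (ker D) (range D))
    (hinv : ∀ x y, B (x + D x) (y + D y) = B x y) (hB : B.Nondegenerate) (hBs : B.IsSymm) :
    (B.restrict (range D)).Nondegenerate := by
  refine ((hBs.restrict _).isRefl.nondegenerate_iff_separatingLeft).mpr fun w hw ↦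
    Subtype.ext (hB.1 w fun v ↦ ?_)
  rw [← B.apply_projectionOnto_range h hinv]
  exact hw _

def IsCompl.projLattice (Λ : Submodule ℤ V) : Submodule ℤ (range D) :=
  Λ.map (((range D).projectionOnto (ker D) h.symm).restrictScalars ℤ)

instance (Λ : Submodule ℤ V) [Λ.IsLattice ℚ] : (h.projLattice Λ).IsLattice ℚ :=
  Submodule.IsLattice.map_of_surjective Λ (Submodule.projectionOnto_surjective h.symm)

theorem LinearMap.BilinForm.mem_dualSubmodule_projLattice_iff
    (hinv : ∀ x y, B (x + D x) (y + D y) = B x y) (Λ : Submodule ℤ V) (x : range D) :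
    x ∈ (B.restrict (range D)).dualSubmodule (h.projLattice Λ) ↔
      (x : V) ∈ B.dualSubmodule Λ := by
  constructor
  · intro hx l hl
    rw [← B.apply_projectionOnto_range h hinv]
    exact hx _ (mem_map_of_mem hl)
  · rintro hx _ ⟨l, hl, rfl⟩
    change B x ((range D).projectionOnto (ker D) h.symm l : V) ∈ _
    rw [B.apply_projectionOnto_range h hinv]
    exact hx l hl

theorem LinearMap.BilinForm.apply_invOnRange_add_apply_invOnRange_add_apply
    (hinv : ∀ x y, B (x + D x) (y + D y) = B x y) (hBs : B.IsSymm) (x y : range D) :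
    B x (D.invOnRange h y) + B y (D.invOnRange h x) + B x y = 0 := by
  have := B.apply_add_apply_add_apply_eq_zero hinv (D.invOnRange h x) (D.invOnRange h y)
  rw [apply_invOnRange, apply_invOnRange, hBs.eq (D.invOnRange h x : V)] at this
  linear_combination this

theorem LinearMap.BilinForm.apply_invOnRange_add_apply_invOnRange_eq_zero
    (hinv : ∀ x y, B (x + D x) (y + D y) = B x y) (hBs : B.IsSymm) {x y fx : range D}
    (hfx : (fx : V) = x + D x) :
    B x (D.invOnRange h y) + B y (D.invOnRange h fx) = 0 := by
  have hσfx : D.invOnRange h fx = D.invOnRange h x + x :=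
    invOnRange_eq_of_apply_eq h (by simp [apply_invOnRange, hfx, add_comm])
  rw [hσfx, Submodule.coe_add, map_add, hBs.eq y x]
  linear_combination B.apply_invOnRange_add_apply_invOnRange_add_apply h hinv hBs x y

theorem LinearMap.BilinForm.isCircleAntisymm_dualSubmodule_projLattice
    (hinv : ∀ x y, B (x + D x) (y + D y) = B x y) (hBs : B.IsSymm) {Λ : Submodule ℤ V}
    (hdual : B.dualSubmodule Λ ≤ Λ) :
    (B.restrict (range D)).IsCircleAntisymm (D.invOnRange h)
      ((B.restrict (range D)).dualSubmodule (h.projLattice Λ)) := by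
  intro x hx y hy
  rw [B.mem_dualSubmodule_projLattice_iff h hinv] at hx hy
  change B x (D.invOnRange h y) + B y (D.invOnRange h x) ∈ _
  rw [eq_neg_of_add_eq_zero_left
    (B.apply_invOnRange_add_apply_invOnRange_add_apply h hinv hBs x y)]
  exact neg_mem (hx _ (hdual hy))

theorem IsCompl.invOnRange_mem_projLattice_iff (Λ : Submodule ℤ V) (x : range D) :
    D.invOnRange h x ∈ h.projLattice Λ ↔ (x : V) ∈ Λ.map (D.restrictScalars ℤ) := by
  constructor
  · rintro ⟨l, hl, hlx⟩
    refine ⟨l, hl, ?_⟩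
    rw [← apply_invOnRange h x, ← hlx]
    exact (apply_projectionOnto_range h l).symm
  · rintro ⟨l, hl, hlx⟩
    refine ⟨l, hl, ?_⟩
    obtain rfl : x = ⟨D l, mem_range_self D l⟩ := Subtype.ext hlx.symm
    exact (invOnRange_apply_self h l).symm

theorem IsCompl.coe_mem_sup_ker_iff_mem_projLattice (Λ : Submodule ℤ V) (w : range D) :
    (w : V) ∈ Λ ⊔ (ker D).restrictScalars ℤ ↔ w ∈ h.projLattice Λ := by
  constructor
  · intro hw
    obtain ⟨l, hl, k, hk, hlk⟩ := mem_sup.mp hw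
    refine ⟨l, hl, ?_⟩
    rw [← Submodule.projectionOnto_apply_left h.symm w]
    simp [← hlk, Submodule.projectionOnto_apply_of_mem_right h.symm hk]
  · rintro ⟨l, hl, rfl⟩
    change ((range D).projectionOnto (ker D) h.symm l : V) ∈ _
    rw [← sub_sub_cancel l ((range D).projectionOnto (ker D) h.symm l : V)]
    exact sub_mem (mem_sup_left hl)
      (mem_sup_right (by simpa using Submodule.sub_projection_mem h.symm l))

end RangeLattice

section QuotientIdentifications

variable {V : Type} [AddCommGroup V] [Module ℚ V] {B : LinearMap.BilinForm ℚ V}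
  {D : V →ₗ[ℚ] V} (h : IsCompl (ker D) (range D)) (Λ : Submodule ℤ V)

def IsCompl.quotEquivInf (hinv : ∀ x y, B (x + D x) (y + D y) = B x y) :
    SQ ((B.restrict (range D)).dualSubmodule (h.projLattice Λ))
        ((h.projLattice Λ).comap ((D.invOnRange h : range D →ₗ[ℚ] range D).restrictScalars ℤ))
      ≃ₗ[ℤ] SQ (B.dualSubmodule Λ ⊓ (range D).restrictScalars ℤ)
        (B.dualSubmodule Λ ⊓ Λ.map (D.restrictScalars ℤ)) :=
  let M := (B.restrict (range D)).dualSubmodule (h.projLattice Λ)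
  let f := Submodule.mkQ _ ∘ₗ LinearMap.codRestrict _
    ((range D).subtype.restrictScalars ℤ ∘ₗ M.subtype) fun x ↦
      mem_inf.mpr ⟨(B.mem_dualSubmodule_projLattice_iff h hinv Λ x).mp x.2, x.1.2⟩
  have hf : Function.Surjective f := fun q ↦ by
    induction q using Submodule.Quotient.induction_on with | H y => ?_
    obtain ⟨hyΛ, hyD⟩ := mem_inf.mp y.2
    exact ⟨⟨⟨y, hyD⟩, (B.mem_dualSubmodule_projLattice_iff h hinv Λ _).mpr hyΛ⟩, rfl⟩
  have hker : ker f = _ := by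
    ext x
    simp only [f, mem_ker, LinearMap.comp_apply, mkQ_apply, Submodule.Quotient.mk_eq_zero,
      mem_comap, mem_inf, LinearMap.coe_restrictScalars]
    exact ⟨fun hx ↦ (h.invOnRange_mem_projLattice_iff Λ x).mpr hx.2,
      fun hx ↦ ⟨(B.mem_dualSubmodule_projLattice_iff h hinv Λ x).mp x.2,
        (h.invOnRange_mem_projLattice_iff Λ x).mp hx⟩⟩
  (quotEquivOfEq _ _ hker.symm).trans (f.quotKerEquivOfSurjective hf)

theorem IsCompl.nonempty_quotEquivSup (hinv : ∀ x y, B (x + D x) (y + D y) = B x y) :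
    Nonempty (SQ ((B.restrict (range D)).dualSubmodule (h.projLattice Λ))
        ((h.projLattice Λ).comap ((D.invOnRange h : range D →ₗ[ℚ] range D).restrictScalars ℤ))
      ≃ₗ[ℤ] SQ (Λ ⊔ (B.dualSubmodule Λ).comap (D.restrictScalars ℤ))
        (Λ ⊔ (ker D).restrictScalars ℤ)) := by
  let M := (B.restrict (range D)).dualSubmodule (h.projLattice Λ)
  let A := Λ ⊔ (B.dualSubmodule Λ).comap (D.restrictScalars ℤ)
  let f := ((Λ ⊔ (ker D).restrictScalars ℤ).comap A.subtype).mkQ ∘ₗ LinearMap.codRestrict A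
    ((range D).subtype.restrictScalars ℤ ∘ₗ
      (D.invOnRange h : range D →ₗ[ℚ] range D).restrictScalars ℤ ∘ₗ M.subtype) fun x ↦
      mem_sup_right <| show D (D.invOnRange h x) ∈ B.dualSubmodule Λ by
        rw [apply_invOnRange]
        exact (B.mem_dualSubmodule_projLattice_iff h hinv Λ x).mp x.2
  have hf : Function.Surjective f := fun q ↦ by
    induction q using Submodule.Quotient.induction_on with | H a => ?_
    obtain ⟨l, hl, v, hv, hlv⟩ := mem_sup.mp a.2
    refine ⟨⟨⟨D v, mem_range_self D v⟩,
      (B.mem_dualSubmodule_projLattice_iff h hinv Λ _).mpr hv⟩, ?_⟩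
    refine (Submodule.Quotient.eq _).mpr ?_
    change ((D.invOnRange h ⟨D v, _⟩ : range D) : V) - a ∈ Λ ⊔ (ker D).restrictScalars ℤ
    rw [invOnRange_apply_self, ← hlv, Submodule.coe_projectionOnto_apply,
      show ∀ p : V, p - (l + v) = -(v - p) - l by intro p; abel]
    exact sub_mem (neg_mem (mem_sup_right (Submodule.sub_projection_mem h.symm v)))
      (mem_sup_left hl)
  have hker : ker f = ((h.projLattice Λ).comap
      ((D.invOnRange h : range D →ₗ[ℚ] range D).restrictScalars ℤ)).comap M.subtype := by
    ext x
    simp only [f, mem_ker, LinearMap.comp_apply, mkQ_apply, Submodule.Quotient.mk_eq_zero,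
      mem_comap, LinearMap.coe_restrictScalars]
    exact h.coe_mem_sup_ker_iff_mem_projLattice Λ _
  exact ⟨(quotEquivOfEq _ _ hker.symm).trans (f.quotKerEquivOfSurjective hf)⟩

end QuotientIdentifications

theorem stmt15_general {V : Type} [AddCommGroup V] [Module ℚ V] [FiniteDimensional ℚ V]
    (B : LinearMap.BilinForm ℚ V) (hsymm : ∀ x y, B x y = B y x)
    (hnd : B.Nondegenerate)
    (F : V →ₗ[ℚ] V)
    (hFinv : ∀ x y, B (F x) (F y) = B x y)
    (D : V →ₗ[ℚ] V) (hD : F = LinearMap.id + D)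
    (hker : LinearMap.ker D = LinearMap.ker (D ∘ₗ D))
    (Λ : Submodule ℤ V) (hfg : Λ.FG)
    (hfull : Submodule.span ℚ (Λ : Set V) = ⊤)
    (hdual : (B.dualSubmodule Λ : Submodule ℤ V) ≤ Λ) :
    -- B_{Λ,Λ^∨} admits a perfect antisymmetric ℚ/ℤ-valued pairing
    (∃ φB : (SQ (Λ ⊔ (B.dualSubmodule Λ).comap (D.restrictScalars ℤ))
          (Λ ⊔ (LinearMap.ker D).restrictScalars ℤ)) →+
        (SQ (Λ ⊔ (B.dualSubmodule Λ).comap (D.restrictScalars ℤ))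
          (Λ ⊔ (LinearMap.ker D).restrictScalars ℤ)) →+ AddCircle (1 : ℚ),
        (∀ x y, φB x y = - φB y x) ∧ Function.Bijective φB) ∧
    -- the explicit pairing ⟨x,y⟩ = (x, (D|_{DV})⁻¹ y) mod ℤ on DV
    (∃ ψ : (LinearMap.range D).restrictScalars ℤ →
          (LinearMap.range D).restrictScalars ℤ → AddCircle (1 : ℚ),
        (∀ (x y : (LinearMap.range D).restrictScalars ℤ) (z : V),
            z ∈ LinearMap.range D → D z = (y : V) →
            ψ x y = ((B x z : ℚ) : AddCircle (1 : ℚ))) ∧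
        -- (i) ⟨x,y⟩ + ⟨y,Fx⟩ = 0 for all x, y ∈ DV
        (∀ (x y fx : (LinearMap.range D).restrictScalars ℤ),
            (fx : V) = F (x : V) → ψ x y + ψ y fx = 0) ∧
        -- (ii) ψ descends to a perfect antisymmetric pairing on
        -- (Λ^∨ ∩ DV)/(Λ^∨ ∩ DΛ) ≅ B_{Λ,Λ^∨}
        (∃ φ : (SQ (B.dualSubmodule Λ ⊓ (LinearMap.range D).restrictScalars ℤ)
              (B.dualSubmodule Λ ⊓ Λ.map (D.restrictScalars ℤ))) →+
            (SQ (B.dualSubmodule Λ ⊓ (LinearMap.range D).restrictScalars ℤ)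
              (B.dualSubmodule Λ ⊓ Λ.map (D.restrictScalars ℤ))) →+ AddCircle (1 : ℚ),
          (∀ a b, φ a b = - φ b a) ∧ Function.Bijective φ ∧
          (∀ x y : (B.dualSubmodule Λ ⊓
              (LinearMap.range D).restrictScalars ℤ : Submodule ℤ V),
            φ (Submodule.Quotient.mk x) (Submodule.Quotient.mk y) =
              ψ ⟨x.1, (Submodule.mem_inf.mp x.2).2⟩
                ⟨y.1, (Submodule.mem_inf.mp y.2).2⟩))) ∧
    Nonempty
      ((SQ (B.dualSubmodule Λ ⊓ (LinearMap.range D).restrictScalars ℤ)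
          (B.dualSubmodule Λ ⊓ Λ.map (D.restrictScalars ℤ))) ≃+
       (SQ (Λ ⊔ (B.dualSubmodule Λ).comap (D.restrictScalars ℤ))
          (Λ ⊔ (LinearMap.ker D).restrictScalars ℤ))) := by
  have h := isCompl_ker_range_of_ker_eq_ker_comp hker
  have hinv : ∀ x y, B (x + D x) (y + D y) = B x y := by simpa [hD] using hFinv
  have hBs : B.IsSymm := ⟨hsymm⟩
  have : Λ.IsLattice ℚ := ⟨hfg, hfull⟩
  have hanti := B.isCircleAntisymm_dualSubmodule_projLattice h hinv hBs hdual (Λ := Λ)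
  have hφW := BilinForm.quotCirclePairing_bijective hanti
    (B.nondegenerate_restrict_range h hinv hnd hBs) (hBs.restrict _) (D.invOnRange h).injective
  obtain ⟨φ, hφa, hφb, hφ⟩ := (h.quotEquivInf Λ hinv).exists_addMonoidHom_pairing _
    (BilinForm.quotCirclePairing_antisymm hanti) hφW
  obtain ⟨e⟩ := h.nonempty_quotEquivSup Λ hinv
  obtain ⟨φB, hφBa, hφBb, -⟩ :=
    e.exists_addMonoidHom_pairing _ (BilinForm.quotCirclePairing_antisymm hanti) hφW
  refine ⟨⟨φB, hφBa, hφBb⟩, ⟨fun x y ↦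
    (B x (D.invOnRange h ⟨y, (restrictScalars_mem ℤ _ _).mp y.2⟩) : AddCircle (1 : ℚ)),
    fun x y z hz hzy ↦ ?_, fun x y fx hfx ↦ ?_, φ, hφa, hφb, fun x y ↦ ?_⟩,
    ⟨((h.quotEquivInf Λ hinv).symm.trans e).toAddEquiv⟩⟩
  · exact congrArg (fun w : range D ↦ (B x w : AddCircle (1 : ℚ)))
      (invOnRange_eq_of_apply_eq h (y := ⟨y, _⟩) (z := ⟨z, hz⟩) hzy)
  · rw [← AddCircle.coe_add, B.apply_invOnRange_add_apply_invOnRange_eq_zero h hinv hBs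
      (x := ⟨x, x.2⟩) (by simp [hfx, hD]), AddCircle.coe_zero]
  · obtain ⟨hxΛ, hxD⟩ := mem_inf.mp x.2
    obtain ⟨hyΛ, hyD⟩ := mem_inf.mp y.2
    exact hφ
      (Submodule.Quotient.mk ⟨⟨x, hxD⟩, (B.mem_dualSubmodule_projLattice_iff h hinv Λ _).mpr hxΛ⟩)
      (Submodule.Quotient.mk ⟨⟨y, hyD⟩, (B.mem_dualSubmodule_projLattice_iff h hinv Λ _).mpr hyΛ⟩)

theorem stmt15 {V : Type} [AddCommGroup V] [Module ℚ V] [FiniteDimensional ℚ V]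
    (B : LinearMap.BilinForm ℚ V) (hsymm : ∀ x y, B x y = B y x)
    (hnd : B.Nondegenerate)
    (F : V →ₗ[ℚ] V) (hFbij : Function.Bijective F)
    (hFinv : ∀ x y, B (F x) (F y) = B x y)
    (D : V →ₗ[ℚ] V) (hD : F = LinearMap.id + D)
    (hker : LinearMap.ker D = LinearMap.ker (D ∘ₗ D))
    (Λ : Submodule ℤ V) (hfg : Λ.FG)
    (hfull : Submodule.span ℚ (Λ : Set V) = ⊤)
    (hstab : Λ.map (F.restrictScalars ℤ) = Λ)
    (hdual : (B.dualSubmodule Λ : Submodule ℤ V) ≤ Λ) :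
    -- B_{Λ,Λ^∨} admits a perfect antisymmetric ℚ/ℤ-valued pairing
    (∃ φB : (SQ (Λ ⊔ (B.dualSubmodule Λ).comap (D.restrictScalars ℤ))
          (Λ ⊔ (LinearMap.ker D).restrictScalars ℤ)) →+
        (SQ (Λ ⊔ (B.dualSubmodule Λ).comap (D.restrictScalars ℤ))
          (Λ ⊔ (LinearMap.ker D).restrictScalars ℤ)) →+ AddCircle (1 : ℚ),
        (∀ x y, φB x y = - φB y x) ∧ Function.Bijective φB) ∧
    -- the explicit pairing ⟨x,y⟩ = (x, (D|_{DV})⁻¹ y) mod ℤ on DV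
    (∃ ψ : (LinearMap.range D).restrictScalars ℤ →
          (LinearMap.range D).restrictScalars ℤ → AddCircle (1 : ℚ),
        (∀ (x y : (LinearMap.range D).restrictScalars ℤ) (z : V),
            z ∈ LinearMap.range D → D z = (y : V) →
            ψ x y = ((B x z : ℚ) : AddCircle (1 : ℚ))) ∧
        -- (i) ⟨x,y⟩ + ⟨y,Fx⟩ = 0 for all x, y ∈ DV
        (∀ (x y fx : (LinearMap.range D).restrictScalars ℤ),
            (fx : V) = F (x : V) → ψ x y + ψ y fx = 0) ∧
        -- (ii) ψ descends to a perfect antisymmetric pairing on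
        -- (Λ^∨ ∩ DV)/(Λ^∨ ∩ DΛ) ≅ B_{Λ,Λ^∨}
        (∃ φ : (SQ (B.dualSubmodule Λ ⊓ (LinearMap.range D).restrictScalars ℤ)
              (B.dualSubmodule Λ ⊓ Λ.map (D.restrictScalars ℤ))) →+
            (SQ (B.dualSubmodule Λ ⊓ (LinearMap.range D).restrictScalars ℤ)
              (B.dualSubmodule Λ ⊓ Λ.map (D.restrictScalars ℤ))) →+ AddCircle (1 : ℚ),
          (∀ a b, φ a b = - φ b a) ∧ Function.Bijective φ ∧
          (∀ x y : (B.dualSubmodule Λ ⊓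
              (LinearMap.range D).restrictScalars ℤ : Submodule ℤ V),
            φ (Submodule.Quotient.mk x) (Submodule.Quotient.mk y) =
              ψ ⟨x.1, (Submodule.mem_inf.mp x.2).2⟩
                ⟨y.1, (Submodule.mem_inf.mp y.2).2⟩))) ∧
    Nonempty
      ((SQ (B.dualSubmodule Λ ⊓ (LinearMap.range D).restrictScalars ℤ)
          (B.dualSubmodule Λ ⊓ Λ.map (D.restrictScalars ℤ))) ≃+
       (SQ (Λ ⊔ (B.dualSubmodule Λ).comap (D.restrictScalars ℤ))
          (Λ ⊔ (LinearMap.ker D).restrictScalars ℤ))) :=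
  stmt15_general B hsymm hnd F hFinv D hD hker Λ hfg hfull hdual
end
end

section
/- Let A be an abelian group with automorphism F and an F-equivariant symmetric perfect ℚ/ℤ-valued pairing. Suppose H ∈ ℤ[F,F⁻¹] satisfies θ(H) = F^{2s}H for some integer s, where θ is the ring automorphism of ℤ[F,F⁻¹] exchanging F and F⁻¹. Then for every integer k, the quotient A/A[(F^{2k}−1)H] admits a perfect alternating ℚ/ℤ-valued pairing. -/
/-!
With respect to the `F`-invariant pairing `φ`, the adjoint of `F` is `F⁻¹`, so the adjoint of
`H = ∑ cᵢ Fⁱ` is `θ(H) = F^{2s} H`. Hence `G = F^{s+k} H` has adjoint `F^{s-k} H`, and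
`Q = G - G* = F^{s-k} (F^{2k} - 1) H` satisfies `φ(Qx, x) = 0`, while `ker Q = A[(F^{2k} - 1) H]`.
For such a `Q` the pairing `(x, y) ↦ φ(Qx, y)` descends to `A / ker Q`. It is nondegenerate because
`φ` is, and every character of `A / ker Q ≅ Q(A)` extends to `A` since `ℚ/ℤ` is divisible, which
together with the perfectness of `φ` gives surjectivity.
-/

noncomputable section

open QuotientAddGroup

section SkewPairing

variable {A T : Type*} [AddCommGroup A] [AddCommGroup T]

theorem pairing_sub_apply_self_eq_zero {φ : A →+ A →+ T} (hsymm : ∀ x y, φ x y = φ y x)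
    {G G' : A →+ A} (hadj : ∀ x y, φ (G x) y = φ x (G' y)) (x : A) :
    φ ((G - G') x) x = 0 := by
  rw [AddMonoidHom.sub_apply, map_sub, AddMonoidHom.sub_apply, hadj, hsymm (G' x), sub_self]

theorem pairing_apply_eq_neg_of_alternating {φ : A →+ A →+ T} (hsymm : ∀ x y, φ x y = φ y x)
    {Q : A →+ A} (halt : ∀ x, φ (Q x) x = 0) (x y : A) : φ (Q x) y = -φ x (Q y) := by
  have h := halt (x + y)
  simp only [map_add, AddMonoidHom.add_apply, halt, zero_add, add_zero] at h
  rw [hsymm x, eq_neg_iff_add_eq_zero, add_comm, h]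

def skewPairingQuotient (φ : A →+ A →+ T) (Q : A →+ A) (hskew : ∀ x y, φ (Q x) y = -φ x (Q y)) :
    (A ⧸ Q.ker) →+ (A ⧸ Q.ker) →+ T :=
  lift Q.ker
    { toFun x := lift Q.ker (φ (Q x)) fun z hz => by
        rw [AddMonoidHom.mem_ker, hskew, (AddMonoidHom.mem_ker).1 hz, map_zero, neg_zero]
      map_zero' := by ext; simp
      map_add' x y := by ext; simp }
    fun z hz => by ext; simp [(AddMonoidHom.mem_ker).1 hz]

variable {φ : A →+ A →+ T} {Q : A →+ A} (hskew : ∀ x y, φ (Q x) y = -φ x (Q y))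

@[simp]
theorem skewPairingQuotient_mk_mk (x y : A) :
    skewPairingQuotient φ Q hskew (mk x) (mk y) = φ (Q x) y :=
  rfl

theorem skewPairingQuotient_injective (hφ : Function.Injective φ) :
    Function.Injective (skewPairingQuotient φ Q hskew) := by
  rw [injective_iff_map_eq_zero]
  intro a hx
  obtain ⟨x, rfl⟩ := mk_surjective a
  have hQx : φ (Q x) = 0 := by
    ext y
    simpa using DFunLike.congr_fun hx (mk y)
  exact (eq_zero_iff x).2 (hφ (hQx.trans (map_zero φ).symm))

theorem skewPairingQuotient_surjective [DivisibleBy T ℤ] (hφ : Function.Surjective φ) :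
    Function.Surjective (skewPairingQuotient φ Q hskew) := by
  intro g
  obtain ⟨h, hh⟩ := (Module.Baer.of_divisible T).extension_property_addMonoidHom
    (kerLift Q) (kerLift_injective Q) g
  obtain ⟨b, rfl⟩ := hφ h
  refine ⟨mk (-b), ?_⟩
  ext w
  simpa [hskew] using DFunLike.congr_fun hh (mk w)

end SkewPairing

section InvariantPairing

variable {A T : Type*} [AddCommGroup A] [AddCommGroup T] {F : AddAut A} {φ : A →+ A →+ T}

theorem pairing_zsmul_apply_zsmul_apply (hF : ∀ x y, φ (F x) (F y) = φ x y) (i : ℤ) (x y : A) :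
    φ ((i • F) x) ((i • F) y) = φ x y := by
  induction i using Int.induction_on generalizing x y with
  | zero => simp
  | succ n ih => rw [add_one_zsmul, AddAut.add_apply, AddAut.add_apply, ih, hF]
  | pred n ih =>
    rw [sub_one_zsmul, AddAut.add_apply, AddAut.add_apply, ih, ← hF, AddAut.apply_neg_self,
      AddAut.apply_neg_self]

theorem pairing_zsmul_apply_left (hF : ∀ x y, φ (F x) (F y) = φ x y) (i : ℤ) (x y : A) :
    φ ((i • F) x) y = φ x ((-i • F) y) := by
  rw [neg_zsmul, ← pairing_zsmul_apply_zsmul_apply hF i x, AddAut.apply_neg_self]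

/-- `AddAut A` is written additively, so `i • F` is `Fⁱ`, `laurentOp F c = ∑ cᵢ Fⁱ`, and
`laurentOp (-F) c` is its image under `θ`. -/
def laurentOp (F : AddAut A) (c : ℤ →₀ ℤ) : A →+ A :=
  c.sum fun i n => n • (i • F).toAddMonoidHom

theorem laurentOp_apply (c : ℤ →₀ ℤ) (x : A) :
    laurentOp F c x = c.sum fun i n => n • (i • F) x := by
  simp [laurentOp, Finsupp.sum]

theorem laurentOp_zsmul_apply (c : ℤ →₀ ℤ) (j : ℤ) (x : A) :
    laurentOp F c ((j • F) x) = (j • F) (laurentOp F c x) := by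
  simp only [laurentOp_apply, Finsupp.sum, map_sum, map_zsmul, ← AddAut.add_apply, ← add_zsmul,
    add_comm]

theorem pairing_laurentOp_apply_left (hF : ∀ x y, φ (F x) (F y) = φ x y) (c : ℤ →₀ ℤ)
    (x y : A) : φ (laurentOp F c x) y = φ x (laurentOp (-F) c y) := by
  simp only [laurentOp_apply, Finsupp.sum, map_sum, map_zsmul, AddMonoidHom.finsetSum_apply,
    AddMonoidHom.smul_apply, pairing_zsmul_apply_left hF, zsmul_neg, neg_zsmul]

theorem laurentOp_neg_apply {c : ℤ →₀ ℤ} {s : ℤ} (hθ : ∀ j, c (-j) = c (j - 2 * s)) (x : A) :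
    laurentOp (-F) c x = ((2 * s) • F) (laurentOp F c x) := by
  have hc : ∀ i, c (-i - 2 * s) = c i := fun i => by
    rw [show -i - 2 * s = -(i + 2 * s) by ring, hθ, add_sub_cancel_right]
  simp only [laurentOp_apply, Finsupp.sum, map_sum, map_zsmul, ← AddAut.add_apply, ← add_zsmul,
    zsmul_neg, ← neg_zsmul]
  refine Finset.sum_nbij' (fun i => -i - 2 * s) (fun i => -i - 2 * s) ?_ ?_ ?_ ?_ ?_
  · intro i hi
    simpa [hc] using hi
  · intro i hi
    simpa [hc] using hi
  · intro i _; ring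
  · intro i _; ring
  · intro i _
    rw [hc, show 2 * s + (-i - 2 * s) = -i by ring]

theorem pairing_zsmul_laurentOp_apply_left (hF : ∀ x y, φ (F x) (F y) = φ x y) {c : ℤ →₀ ℤ}
    {s : ℤ} (hθ : ∀ j, c (-j) = c (j - 2 * s)) (a : ℤ) (x y : A) :
    φ ((a • F) (laurentOp F c x)) y = φ x (((2 * s - a) • F) (laurentOp F c y)) := by
  rw [pairing_zsmul_apply_left hF, pairing_laurentOp_apply_left hF, laurentOp_neg_apply hθ,
    laurentOp_zsmul_apply, ← AddAut.add_apply, ← add_zsmul, ← sub_eq_add_neg]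

end InvariantPairing

theorem stmt18 (A : Type) [AddCommGroup A]
    (F : AddAut A)
    (φ : A →+ A →+ AddCircle (1 : ℚ))
    (hsymm : ∀ x y, φ x y = φ y x)
    (hFinv : ∀ x y, φ (F x) (F y) = φ x y)
    (hperf : Function.Bijective φ)
    -- H = ∑ᵢ c i · Fⁱ ∈ ℤ[F,F⁻¹], given by its (finitely supported) coefficients
    (c : ℤ →₀ ℤ) (s : ℤ)
    -- θ(H) = F^{2s} H, as formal Laurent polynomials
    (hθ : ∀ j : ℤ, c (-j) = c (j - 2 * s))
    (H : A →+ A) (hH : H = c.sum fun i n => n • (i • F).toAddMonoidHom)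
    (k : ℤ)
    (K : AddSubgroup A)
    (hK : K = ((((2 * k) • F).toAddMonoidHom - AddMonoidHom.id A).comp H).ker) :
    ∃ ψ : (A ⧸ K) →+ (A ⧸ K) →+ AddCircle (1 : ℚ),
      Function.Bijective ψ ∧ ∀ x, ψ x x = 0 := by
  change H = laurentOp F c at hH
  subst hH
  set G := ((s + k) • F).toAddMonoidHom.comp (laurentOp F c)
  set G' := ((s - k) • F).toAddMonoidHom.comp (laurentOp F c)
  have hadj : ∀ x y, φ (G x) y = φ x (G' y) := fun x y => by
    simpa [G, G', show 2 * s - (s + k) = s - k by ring] using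
      pairing_zsmul_laurentOp_apply_left hFinv hθ (s + k) x y
  have halt : ∀ x, φ ((G - G') x) x = 0 := pairing_sub_apply_self_eq_zero hsymm hadj
  have hker : K = (G - G').ker := by
    have hfactor : G - G' = ((s - k) • F).toAddMonoidHom.comp
        ((((2 * k) • F).toAddMonoidHom - AddMonoidHom.id A).comp (laurentOp F c)) := by
      ext x
      simp [G, G', ← AddAut.add_apply, ← add_zsmul, show s - k + 2 * k = s + k by ring]
    rw [hK, hfactor,
      AddMonoidHom.ker_comp_of_injective _ ((s - k) • F).toAddMonoidHom ((s - k) • F).injective]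
  subst hker
  have hskew := pairing_apply_eq_neg_of_alternating hsymm halt
  refine ⟨skewPairingQuotient φ (G - G') hskew, ⟨skewPairingQuotient_injective hskew hperf.1,
    skewPairingQuotient_surjective hskew hperf.2⟩, fun x => ?_⟩
  obtain ⟨x, rfl⟩ := mk_surjective x
  exact halt x
end
end
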